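/- arXiv:1101.4873 — 7 statements merged into one kernel-verified Lean document; each statement's English description precedes it below -/
import Mathlib

section
/- Let g : ℝ → ℝ be smooth, u ≠ v, M(u,v) = (g(v)-g(u))/(v-u), and _iM_j = ∂^{i+j}M/∂u^i∂v^j. Then for any positive integer k and any integer n ≥ 2: (n-1)! · g^{(k+n-1)}(v) = Σ_{i=0}^{n} C(n,i) · (k+n-1)_{(n-i)} · (v-u)^i · _{n-1}M_{k-1+i}(u,v), where (m)_{(p)} = m(m-1)⋯(m-p+1) is the falling factorial and (m)_{(0)} = 1. -/
open Filter Set Topology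

open intervalIntegral
open scoped ContDiff

/-- Mixed partial derivative `∂^{i+j} M / ∂u^i ∂v^j` of `M(u,v) = (g v - g u)/(v-u)`. -/
noncomputable def Mmix (g : ℝ → ℝ) (i j : ℕ) (u v : ℝ) : ℝ :=
  iteratedDeriv i (fun u' => iteratedDeriv j (fun v' => (g v' - g u') / (v' - u')) v) u

lemma param_hasDerivAt (φ a b : ℝ → ℝ) (hφ : Continuous φ) (ha : Continuous a) (hb : Continuous b)
    (G G' : ℝ → ℝ) (hG : ∀ x, HasDerivAt G (G' x) x) (hG' : Continuous G') (x₀ : ℝ) :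
    HasDerivAt (fun x => ∫ t in (0:ℝ)..1, φ t * G (a t + x * b t))
      (∫ t in (0:ℝ)..1, φ t * b t * G' (a t + x₀ * b t)) x₀ := by
  have hGc : Continuous G := by
    have : Differentiable ℝ G := fun x => (hG x).differentiableAt
    exact this.continuous
  -- the map (x, t) ↦ F' x t is continuous
  have hcF' : Continuous (fun p : ℝ × ℝ => φ p.2 * b p.2 * G' (a p.2 + p.1 * b p.2)) := by
    apply Continuous.mul
    · exact (hφ.comp continuous_snd).mul (hb.comp continuous_snd)
    · exact hG'.comp ((ha.comp continuous_snd).add (continuous_fst.mul (hb.comp continuous_snd)))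
  obtain ⟨C, hC⟩ : ∃ C, ∀ p ∈ (Metric.closedBall x₀ 1 ×ˢ Icc (0:ℝ) 1),
      ‖φ p.2 * b p.2 * G' (a p.2 + p.1 * b p.2)‖ ≤ C := by
    obtain ⟨C, hC⟩ := ((isCompact_closedBall x₀ 1).prod isCompact_Icc).exists_bound_of_continuousOn
      hcF'.continuousOn
    exact ⟨C, hC⟩
  have key := intervalIntegral.hasDerivAt_integral_of_dominated_loc_of_deriv_le
    (F := fun x t => φ t * G (a t + x * b t))
    (F' := fun x t => φ t * b t * G' (a t + x * b t))
    (μ := MeasureTheory.volume) (a := (0:ℝ)) (b := 1) (x₀ := x₀) (bound := fun _ => C) (s := Metric.ball x₀ 1) (Metric.ball_mem_nhds x₀ one_pos)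
    ?_ ?_ ?_ ?_ ?_ ?_
  · exact key.2
  · exact Eventually.of_forall fun x =>
      ((hφ.mul (hGc.comp (ha.add ((continuous_const (y := x)).mul hb)))).aestronglyMeasurable)
  · exact (hφ.mul (hGc.comp (ha.add (continuous_const.mul hb)))).intervalIntegrable 0 1
  · exact (hcF'.comp (Continuous.prodMk_right x₀)).aestronglyMeasurable
  · refine Eventually.of_forall fun t ht x hx => ?_
    have ht' : t ∈ Icc (0:ℝ) 1 := by
      rw [uIoc_of_le (by norm_num : (0:ℝ) ≤ 1)] at ht; exact Ioc_subset_Icc_self ht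
    exact hC (x, t) ⟨Metric.ball_subset_closedBall hx, ht'⟩
  · exact intervalIntegrable_const
  · refine Eventually.of_forall fun t ht x hx => ?_
    have haff : HasDerivAt (fun x : ℝ => a t + x * b t) (b t) x := by
      simpa using ((hasDerivAt_id x).mul_const (b t)).const_add (a t)
    have := ((hG (a t + x * b t)).comp x haff).const_mul (φ t)
    convert this using 1
    · rfl
    · rfl
    · ring

section
variable (g : ℝ → ℝ)

noncomputable def Kf (i j : ℕ) (u v : ℝ) : ℝ :=
  ∫ t in (0:ℝ)..1, (1-t)^i * t^j * iteratedDeriv (i+j+1) g (u + t*(v-u))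

variable {g} (hg : ContDiff ℝ (⊤ : ℕ∞) g)
include hg

lemma gd_cont (n : ℕ) : Continuous (iteratedDeriv n g) := by
  rw [iteratedDeriv_eq_iterate]
  exact ((hg.of_le (by simp)).iterate_deriv n).continuous

lemma gd_hasDeriv (n : ℕ) (x : ℝ) :
    HasDerivAt (iteratedDeriv n g) (iteratedDeriv (n+1) g x) x := by
  rw [iteratedDeriv_succ]
  have h : ContDiff ℝ ∞ (iteratedDeriv n g) := by
    rw [iteratedDeriv_eq_iterate]; exact (hg.of_le (by simp)).iterate_deriv n
  exact ((h.differentiable (by simp)).differentiableAt).hasDerivAt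

lemma Kf_hasDerivAt_v (i j : ℕ) (u v : ℝ) :
    HasDerivAt (fun v' => Kf g i j u v') (Kf g i (j+1) u v) v := by
  have h := param_hasDerivAt (fun t => (1-t)^i * t^j) (fun t => u*(1-t)) (fun t => t)
    (by continuity) (by continuity) continuous_id
    (iteratedDeriv (i+j+1) g) (iteratedDeriv (i+j+2) g)
    (fun x => gd_hasDeriv hg (i+j+1) x) (gd_cont hg _) v
  have e1 : (fun x => ∫ t in (0:ℝ)..1, ((1-t)^i * t^j) * iteratedDeriv (i+j+1) g (u*(1-t) + x * t))
      = fun v' => Kf g i j u v' := by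
    funext x
    unfold Kf
    apply intervalIntegral.integral_congr
    intro t _
    ring_nf
  rw [e1] at h
  convert h using 1
  unfold Kf
  apply intervalIntegral.integral_congr
  intro t _
  have : i + (j+1) + 1 = i + j + 2 := by ring
  rw [this]
  ring_nf

lemma Kf_hasDerivAt_u (i j : ℕ) (u v : ℝ) :
    HasDerivAt (fun u' => Kf g i j u' v) (Kf g (i+1) j u v) u := by
  have h := param_hasDerivAt (fun t => (1-t)^i * t^j) (fun t => v*t) (fun t => 1-t)
    (by continuity) (by continuity) (by continuity)
    (iteratedDeriv (i+j+1) g) (iteratedDeriv (i+j+2) g)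
    (fun x => gd_hasDeriv hg (i+j+1) x) (gd_cont hg _) u
  have e1 : (fun x => ∫ t in (0:ℝ)..1, ((1-t)^i * t^j) * iteratedDeriv (i+j+1) g (v*t + x * (1-t)))
      = fun u' => Kf g i j u' v := by
    funext x
    unfold Kf
    apply intervalIntegral.integral_congr
    intro t _
    ring_nf
  rw [e1] at h
  convert h using 1
  unfold Kf
  apply intervalIntegral.integral_congr
  intro t _
  have : i + 1 + j + 1 = i + j + 2 := by ring
  rw [this]
  ring_nf

end

section
variable {g : ℝ → ℝ} (hg : ContDiff ℝ (⊤ : ℕ∞) g)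
include hg

lemma iter_v (u : ℝ) (j : ℕ) (v : ℝ) :
    iteratedDeriv j (fun v' => Kf g 0 0 u v') v = Kf g 0 j u v := by
  induction j generalizing v with
  | zero => simp [iteratedDeriv_zero]
  | succ j ih =>
    rw [iteratedDeriv_succ]
    have : iteratedDeriv j (fun v' => Kf g 0 0 u v') = fun v' => Kf g 0 j u v' :=
      funext fun v' => ih v'
    rw [this]
    exact (Kf_hasDerivAt_v hg 0 j u v).deriv

lemma iter_u (v : ℝ) (j : ℕ) (i : ℕ) (u : ℝ) :
    iteratedDeriv i (fun u' => Kf g 0 j u' v) u = Kf g i j u v := by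
  induction i generalizing u with
  | zero => simp [iteratedDeriv_zero]
  | succ i ih =>
    rw [iteratedDeriv_succ]
    have : iteratedDeriv i (fun u' => Kf g 0 j u' v) = fun u' => Kf g i j u' v :=
      funext fun u' => ih u'
    rw [this]
    exact (Kf_hasDerivAt_u hg i j u v).deriv

lemma Kf_zero_zero {u v : ℝ} (huv : u ≠ v) : Kf g 0 0 u v = (g v - g u) / (v - u) := by
  have hsub : v - u ≠ 0 := sub_ne_zero.mpr (Ne.symm huv)
  have hgd : ∀ x, HasDerivAt g (deriv g x) x := fun x => by
    have := gd_hasDeriv hg 0 x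
    simpa [iteratedDeriv_zero, iteratedDeriv_one] using this
  have hcd : Continuous (deriv g) := by
    have := gd_cont hg 1; rwa [iteratedDeriv_one] at this
  have subst : ∫ t in (0:ℝ)..1, (v-u) • deriv g (u + t*(v-u)) =
      ∫ x in (u + 0*(v-u))..(u + 1*(v-u)), deriv g x := by
    apply intervalIntegral.integral_comp_smul_deriv (f := fun t => u + t*(v-u))
      (f' := fun _ => v - u) (g := deriv g)
    · intro t _
      simpa using ((hasDerivAt_id t).mul_const (v-u)).const_add u
    · exact continuousOn_const
    · exact hcd
  have ftc : ∫ x in u..v, deriv g x = g v - g u := by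
    apply intervalIntegral.integral_deriv_eq_sub (fun x _ => by
      exact ((hg.differentiable (by simp)).differentiableAt))
    exact (hcd.intervalIntegrable u v)
  have : (v - u) * Kf g 0 0 u v = g v - g u := by
    unfold Kf
    rw [← intervalIntegral.integral_const_mul]
    simp only [pow_zero, one_mul, iteratedDeriv_one]
    rw [show ((0:ℕ)+0+1) = 1 from rfl] at *
    calc ∫ t in (0:ℝ)..1, (v-u) * iteratedDeriv 1 g (u + t*(v-u))
        = ∫ t in (0:ℝ)..1, (v-u) • deriv g (u + t*(v-u)) := by
          apply intervalIntegral.integral_congr; intro t _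
          simp [iteratedDeriv_one, smul_eq_mul]
      _ = ∫ x in (u + 0*(v-u))..(u + 1*(v-u)), deriv g x := subst
      _ = g v - g u := by rw [show u + 0*(v-u) = u by ring, show u + 1*(v-u) = v by ring]; exact ftc
  field_simp [hsub]
  linarith [this]

end

lemma iteratedDeriv_congr_open {f h : ℝ → ℝ} {s : Set ℝ} (hs : IsOpen s)
    (hfh : ∀ x ∈ s, f x = h x) (n : ℕ) : ∀ x ∈ s, iteratedDeriv n f x = iteratedDeriv n h x := by
  induction n with
  | zero => simpa [iteratedDeriv_zero] using hfh
  | succ n ih =>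
    intro x hx
    rw [iteratedDeriv_succ, iteratedDeriv_succ]
    apply Filter.EventuallyEq.deriv_eq
    exact Filter.eventually_of_mem (hs.mem_nhds hx) (fun y hy => ih y hy)



section
variable {g : ℝ → ℝ} (hg : ContDiff ℝ (⊤ : ℕ∞) g)
include hg

lemma inner_eq (v : ℝ) (j : ℕ) : ∀ u' : ℝ, u' ≠ v →
    iteratedDeriv j (fun v' => (g v' - g u') / (v' - u')) v = Kf g 0 j u' v := by
  intro u' hu'
  have h1 : ∀ x ∈ {x : ℝ | x ≠ u'},
      iteratedDeriv j (fun v' => (g v' - g u') / (v' - u')) x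
        = iteratedDeriv j (fun v' => Kf g 0 0 u' v') x := by
    apply iteratedDeriv_congr_open (isOpen_compl_singleton)
    intro x hx
    exact (Kf_zero_zero hg (Ne.symm hx)).symm
  rw [h1 v (Ne.symm hu'), iter_v hg]

lemma Mmix_eq_Kf {u v : ℝ} (huv : u ≠ v) (i j : ℕ) : Mmix g i j u v = Kf g i j u v := by
  unfold Mmix
  have h1 : ∀ x ∈ {x : ℝ | x ≠ v},
      iteratedDeriv i (fun u' => iteratedDeriv j (fun v' => (g v' - g u') / (v' - u')) v) x
        = iteratedDeriv i (fun u' => Kf g 0 j u' v) x := by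
    apply iteratedDeriv_congr_open (isOpen_compl_singleton)
    intro x hx
    exact inner_eq hg v j x hx
  rw [h1 u huv, iter_u hg]

end

section
variable {g : ℝ → ℝ} (hg : ContDiff ℝ (⊤ : ℕ∞) g)
include hg

lemma recR1 (p j : ℕ) (u v : ℝ) :
    ((p:ℝ)+1) * Kf g p (j+1) u v
      = ((j:ℝ)+1) * Kf g (p+1) j u v + (v-u) * Kf g (p+1) (j+1) u v := by
  set m := p + j + 2 with hm
  have hw : ∀ t : ℝ, HasDerivAt (fun t : ℝ => u + t*(v-u)) (v-u) t := fun t => by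
    simpa using ((hasDerivAt_id t).mul_const (v-u)).const_add u
  have hwc : Continuous (fun t : ℝ => u + t*(v-u)) :=
    continuous_const.add (continuous_id.mul continuous_const)
  set G := iteratedDeriv m g with hGdef
  set G' := iteratedDeriv (m+1) g with hG'def
  have hGc : Continuous G := gd_cont hg m
  have hG'c : Continuous G' := gd_cont hg (m+1)
  set A : ℝ → ℝ := fun t => (1-t)^p * t^(j+1) * G (u + t*(v-u)) with hA
  set B : ℝ → ℝ := fun t => (1-t)^(p+1) * t^j * G (u + t*(v-u)) with hB
  set C : ℝ → ℝ := fun t => (1-t)^(p+1) * t^(j+1) * G' (u + t*(v-u)) with hC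
  have cpoly : ∀ q : ℕ, Continuous (fun t : ℝ => (1-t)^q) := fun q =>
    (continuous_const.sub continuous_id).pow q
  have cA : Continuous A := ((cpoly p).mul (continuous_pow (j+1))).mul (hGc.comp hwc)
  have cB : Continuous B := ((cpoly (p+1)).mul (continuous_pow j)).mul (hGc.comp hwc)
  have cC : Continuous C := ((cpoly (p+1)).mul (continuous_pow (j+1))).mul (hG'c.comp hwc)
  set F' : ℝ → ℝ := fun t => (-((p:ℝ)+1)) * A t + (((j:ℝ)+1) * B t + (v-u) * C t) with hF'
  have hF : ∀ t : ℝ, HasDerivAt (fun t => (1-t)^(p+1) * t^(j+1) * G (u + t*(v-u))) (F' t) t := by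
    intro t
    have h1 : HasDerivAt (fun t : ℝ => (1-t)^(p+1)) ((((p:ℝ)+1) * (1-t)^p) * (-1)) t := by
      have hb : HasDerivAt (fun t : ℝ => 1 - t) (-1) t := by
        simpa using (hasDerivAt_id t).const_sub 1
      have := hb.fun_pow (p+1)
      simpa using this
    have h2 : HasDerivAt (fun t : ℝ => t^(j+1)) (((j:ℝ)+1) * t^j) t := by
      simpa using hasDerivAt_pow (j+1) t
    have h3 : HasDerivAt (fun t : ℝ => G (u + t*(v-u))) (G' (u + t*(v-u)) * (v-u)) t := by
      have := (gd_hasDeriv hg m (u + t*(v-u))).comp t (hw t)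
      exact this
    have h4 := (h1.mul h2).mul h3
    have e : (((p:ℝ)+1) * (1-t)^p * (-1) * t^(j+1) + (1-t)^(p+1) * (((j:ℝ)+1) * t^j))
          * G (u + t*(v-u)) + (1-t)^(p+1) * t^(j+1) * (G' (u + t*(v-u)) * (v-u)) = F' t := by
      simp only [hF', hA, hB, hC]
      ring
    exact e ▸ h4
  have cF' : Continuous F' :=
    (continuous_const.mul cA).add ((continuous_const.mul cB).add (continuous_const.mul cC))
  have hInt := intervalIntegral.integral_eq_sub_of_hasDerivAt
    (f := fun t => (1-t)^(p+1) * t^(j+1) * G (u + t*(v-u))) (f' := F')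
    (fun t _ => hF t) (cF'.intervalIntegrable 0 1)
  have hzero : (∫ t in (0:ℝ)..1, F' t) = 0 := by
    rw [hInt]
    simp
  have eA : Kf g p (j+1) u v = ∫ t in (0:ℝ)..1, A t := by
    unfold Kf; rw [show p + (j+1) + 1 = m by omega]
  have eB : Kf g (p+1) j u v = ∫ t in (0:ℝ)..1, B t := by
    unfold Kf; rw [show (p+1) + j + 1 = m by omega]
  have eC : Kf g (p+1) (j+1) u v = ∫ t in (0:ℝ)..1, C t := by
    unfold Kf; rw [show (p+1) + (j+1) + 1 = m + 1 by omega]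
  have split : (∫ t in (0:ℝ)..1, F' t)
      = (-((p:ℝ)+1)) * (∫ t in (0:ℝ)..1, A t)
        + (((j:ℝ)+1) * (∫ t in (0:ℝ)..1, B t) + (v-u) * (∫ t in (0:ℝ)..1, C t)) := by
    rw [← intervalIntegral.integral_const_mul, ← intervalIntegral.integral_const_mul,
      ← intervalIntegral.integral_const_mul,
      ← intervalIntegral.integral_add ((continuous_const.fun_mul cB).intervalIntegrable 0 1)
        ((continuous_const.fun_mul cC).intervalIntegrable 0 1),
      ← intervalIntegral.integral_add ((continuous_const.fun_mul cA).intervalIntegrable 0 1)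
        (((continuous_const.fun_mul cB).fun_add (continuous_const.fun_mul cC)).intervalIntegrable 0 1)]
  rw [hzero] at split
  rw [eA, eB, eC]
  linarith [split]

end

section
variable {g : ℝ → ℝ} (hg : ContDiff ℝ (⊤ : ℕ∞) g)
include hg

lemma recR2 (j : ℕ) (u v : ℝ) :
    ((j:ℝ)+1) * Kf g 0 j u v + (v-u) * Kf g 0 (j+1) u v = iteratedDeriv (j+1) g v := by
  have hw : ∀ t : ℝ, HasDerivAt (fun t : ℝ => u + t*(v-u)) (v-u) t := fun t => by
    simpa using ((hasDerivAt_id t).mul_const (v-u)).const_add u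
  have hwc : Continuous (fun t : ℝ => u + t*(v-u)) :=
    continuous_const.add (continuous_id.mul continuous_const)
  set G := iteratedDeriv (j+1) g with hGdef
  set G' := iteratedDeriv (j+2) g with hG'def
  have hGc : Continuous G := gd_cont hg (j+1)
  have hG'c : Continuous G' := gd_cont hg (j+2)
  set B : ℝ → ℝ := fun t => t^j * G (u + t*(v-u)) with hB
  set C : ℝ → ℝ := fun t => t^(j+1) * G' (u + t*(v-u)) with hC
  have cB : Continuous B := (continuous_pow j).mul (hGc.comp hwc)
  have cC : Continuous C := (continuous_pow (j+1)).mul (hG'c.comp hwc)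
  set F' : ℝ → ℝ := fun t => ((j:ℝ)+1) * B t + (v-u) * C t with hF'
  have hF : ∀ t : ℝ, HasDerivAt (fun t => t^(j+1) * G (u + t*(v-u))) (F' t) t := by
    intro t
    have h2 : HasDerivAt (fun t : ℝ => t^(j+1)) (((j:ℝ)+1) * t^j) t := by
      simpa using hasDerivAt_pow (j+1) t
    have h3 : HasDerivAt (fun t : ℝ => G (u + t*(v-u))) (G' (u + t*(v-u)) * (v-u)) t := by
      have := (gd_hasDeriv hg (j+1) (u + t*(v-u))).comp t (hw t)
      have e : j + 1 + 1 = j + 2 := by omega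
      rw [e] at this
      exact this
    have h4 := h2.mul h3
    have e : ((j:ℝ)+1) * t^j * G (u + t*(v-u)) + t^(j+1) * (G' (u + t*(v-u)) * (v-u)) = F' t := by
      simp only [hF', hB, hC]
      ring
    exact e ▸ h4
  have cF' : Continuous F' :=
    (continuous_const.mul cB).add (continuous_const.mul cC)
  have hInt := intervalIntegral.integral_eq_sub_of_hasDerivAt
    (f := fun t => t^(j+1) * G (u + t*(v-u))) (f' := F')
    (fun t _ => hF t) (cF'.intervalIntegrable 0 1)
  have hval : (∫ t in (0:ℝ)..1, F' t) = G v := by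
    rw [hInt]
    norm_num
  have eB : Kf g 0 j u v = ∫ t in (0:ℝ)..1, B t := by
    unfold Kf
    apply intervalIntegral.integral_congr
    intro t _
    simp [hB, hGdef]
  have eC : Kf g 0 (j+1) u v = ∫ t in (0:ℝ)..1, C t := by
    unfold Kf
    apply intervalIntegral.integral_congr
    intro t _
    simp [hC, hG'def, show 0 + (j+1) + 1 = j + 2 by omega, show j + 1 + 1 = j + 2 by omega]
  have split : (∫ t in (0:ℝ)..1, F' t)
      = ((j:ℝ)+1) * (∫ t in (0:ℝ)..1, B t) + (v-u) * (∫ t in (0:ℝ)..1, C t) := by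
    rw [← intervalIntegral.integral_const_mul, ← intervalIntegral.integral_const_mul,
      ← intervalIntegral.integral_add ((continuous_const.fun_mul cB).intervalIntegrable 0 1)
        ((continuous_const.fun_mul cC).intervalIntegrable 0 1)]
  rw [hval] at split
  rw [eB, eC]
  linarith [split]

end

lemma pascal_split (n : ℕ) (T : ℕ → ℝ) :
    ∑ i ∈ Finset.range (n+2), ((n+1).choose i : ℝ) * T i
      = ∑ i ∈ Finset.range (n+1), (n.choose i : ℝ) * T i
        + ∑ i ∈ Finset.range (n+1), (n.choose i : ℝ) * T (i+1) := by
  rw [Finset.sum_range_succ']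
  have h1 : ∑ i ∈ Finset.range (n+1), ((n+1).choose (i+1) : ℝ) * T (i+1)
      = ∑ i ∈ Finset.range (n+1),
          ((n.choose i : ℝ) * T (i+1) + (n.choose (i+1) : ℝ) * T (i+1)) := by
    apply Finset.sum_congr rfl
    intro i _
    rw [Nat.choose_succ_succ]
    push_cast
    ring
  rw [h1, Finset.sum_add_distrib]
  have h2 : ∑ i ∈ Finset.range (n+1), ((n.choose (i+1) : ℝ)) * T (i+1)
        + ((n.choose 0 : ℝ)) * T 0
      = ∑ i ∈ Finset.range (n+1), (n.choose i : ℝ) * T i := by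
    rw [← Finset.sum_range_succ' (fun i => (n.choose i : ℝ) * T i) (n+1), Finset.sum_range_succ]
    simp
  simp only [Nat.choose_zero_right, Nat.cast_one, one_mul] at h2 ⊢
  linarith [h2]

section
variable {g : ℝ → ℝ} (hg : ContDiff ℝ (⊤ : ℕ∞) g)
include hg

lemma lemA (p : ℕ) : ∀ (q : ℕ) (u v : ℝ),
    (p.factorial : ℝ) * Kf g 0 (p+q) u v
      = ∑ i ∈ Finset.range (p+1), (p.choose i : ℝ) *
          (((p+q).descFactorial (p-i) : ℝ) * ((v-u)^i * Kf g p (q+i) u v)) := by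
  induction p with
  | zero => intro q u v; simp
  | succ p ih =>
    intro q u v
    have H := ih (q+1) u v
    have key : ∀ i ∈ Finset.range (p+1),
        (p.choose i : ℝ) * (((p+(q+1)).descFactorial (p-i) : ℝ)
            * ((v-u)^i * (((p:ℝ)+1) * Kf g p ((q+1)+i) u v)))
          = (p.choose i : ℝ) * (((p+q+1).descFactorial (p+1-i) : ℝ)
              * ((v-u)^i * Kf g (p+1) (q+i) u v))
            + (p.choose i : ℝ) * (((p+q+1).descFactorial (p+1-(i+1)) : ℝ)
              * ((v-u)^(i+1) * Kf g (p+1) (q+(i+1)) u v)) := by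
      intro i hi
      have hip : i ≤ p := by
        simpa [Nat.lt_succ_iff] using Finset.mem_range.mp hi
      have hr := recR1 hg p (q+i) u v
      rw [show (q+1)+i = (q+i)+1 by omega]
      rw [hr]
      have hd : ((p+q+1).descFactorial (p+1-i) : ℝ)
          = ((q+i+1 : ℕ) : ℝ) * ((p+q+1).descFactorial (p-i) : ℝ) := by
        rw [show p+1-i = (p-i)+1 by omega, Nat.descFactorial_succ,
          show p+q+1 - (p-i) = q+i+1 by omega]
        push_cast
        ring
      rw [hd, show p+1-(i+1) = p-i by omega, show p+(q+1) = p+q+1 by omega]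
      push_cast
      ring
    calc ((p+1).factorial : ℝ) * Kf g 0 ((p+1)+q) u v
        = ((p:ℝ)+1) * ((p.factorial : ℝ) * Kf g 0 (p+(q+1)) u v) := by
          rw [Nat.factorial_succ, show (p+1)+q = p+(q+1) by omega]
          push_cast
          ring
      _ = ∑ i ∈ Finset.range (p+1), (p.choose i : ℝ) *
            (((p+(q+1)).descFactorial (p-i) : ℝ)
              * ((v-u)^i * (((p:ℝ)+1) * Kf g p ((q+1)+i) u v))) := by
          rw [H, Finset.mul_sum]
          apply Finset.sum_congr rfl
          intro i _
          ring
      _ = ∑ i ∈ Finset.range (p+1), ((p.choose i : ℝ) *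
            (((p+q+1).descFactorial (p+1-i) : ℝ) * ((v-u)^i * Kf g (p+1) (q+i) u v))
            + (p.choose i : ℝ) *
            (((p+q+1).descFactorial (p+1-(i+1)) : ℝ)
              * ((v-u)^(i+1) * Kf g (p+1) (q+(i+1)) u v))) := Finset.sum_congr rfl key
      _ = ∑ i ∈ Finset.range (p+2), ((p+1).choose i : ℝ) *
            (((p+q+1).descFactorial (p+1-i) : ℝ) * ((v-u)^i * Kf g (p+1) (q+i) u v)) := by
          rw [Finset.sum_add_distrib,
            pascal_split p (fun i => ((p+q+1).descFactorial (p+1-i) : ℝ)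
              * ((v-u)^i * Kf g (p+1) (q+i) u v))]
      _ = ∑ i ∈ Finset.range ((p+1)+1), ((p+1).choose i : ℝ) *
            ((((p+1)+q).descFactorial ((p+1)-i) : ℝ) * ((v-u)^i * Kf g (p+1) (q+i) u v)) := by
          rw [show p+q+1 = (p+1)+q by omega]

end


/-- Lemma 1: for `k ≥ 1` and `n ≥ 2`,
`(n-1)! g^{(k+n-1)}(v) = Σ_{i=0}^n C(n,i) (k+n-1)_{(n-i)} (v-u)^i · _{n-1}M_{k-1+i}(u,v)`. -/
theorem stmt2 (g : ℝ → ℝ) (hg : ContDiff ℝ (⊤ : ℕ∞) g) (u v : ℝ) (huv : u ≠ v)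
    (k n : ℕ) (hk : 1 ≤ k) (hn : 2 ≤ n) :
    ((n - 1).factorial : ℝ) * iteratedDeriv (k + n - 1) g v =
      ∑ i ∈ Finset.range (n + 1),
        (n.choose i : ℝ) * ((k + n - 1).descFactorial (n - i) : ℝ) * (v - u) ^ i *
          Mmix g (n - 1) (k - 1 + i) u v := by
  obtain ⟨p, rfl⟩ : ∃ p, n = p + 2 := ⟨n - 2, by omega⟩
  obtain ⟨c, rfl⟩ : ∃ c, k = c + 1 := ⟨k - 1, by omega⟩
  have e1 : c + 1 + (p + 2) - 1 = c + p + 2 := by omega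
  have e2 : p + 2 - 1 = p + 1 := by omega
  have e3 : ∀ i : ℕ, c + 1 - 1 + i = c + i := fun i => by omega
  rw [e1, e2]
  have hMK : ∀ i : ℕ, Mmix g (p+1) (c + 1 - 1 + i) u v = Kf g (p+1) (c+i) u v := by
    intro i
    rw [e3 i]
    exact Mmix_eq_Kf hg huv (p+1) (c+i)
  -- left-hand side via R2 and lemA
  have hR2 := recR2 hg (c+p+1) u v
  have hA1 := lemA hg (p+1) c u v
  have hA2 := lemA hg (p+1) (c+1) u v
  have lhs_eq : ((p+1).factorial : ℝ) * iteratedDeriv (c+p+2) g v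
      = ((c:ℝ)+p+2) * (∑ i ∈ Finset.range (p+2), (((p+1).choose i : ℝ)) *
            ((((p+1)+c).descFactorial (p+1-i) : ℝ) * ((v-u)^i * Kf g (p+1) (c+i) u v)))
        + (v-u) * (∑ i ∈ Finset.range (p+2), (((p+1).choose i : ℝ)) *
            ((((p+1)+(c+1)).descFactorial (p+1-i) : ℝ) * ((v-u)^i * Kf g (p+1) ((c+1)+i) u v))) := by
    rw [← hA1, ← hA2]
    rw [show (c+p+1) + 1 = c+p+2 by omega] at hR2
    rw [← hR2]
    rw [show (p+1)+c = c+p+1 by omega, show (p+1)+(c+1) = c+p+2 by omega]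
    push_cast
    ring
  rw [lhs_eq]
  -- right-hand side via pascal_split
  have rhs_eq : ∑ i ∈ Finset.range (p+2+1),
        ((p+2).choose i : ℝ) * ((c+p+2).descFactorial (p+2-i) : ℝ) * (v-u)^i *
          Mmix g (p+1) (c + 1 - 1 + i) u v
      = ∑ i ∈ Finset.range (p+3), ((p+2).choose i : ℝ) *
          (((c+p+2).descFactorial (p+2-i) : ℝ) * ((v-u)^i * Kf g (p+1) (c+i) u v)) := by
    apply Finset.sum_congr rfl
    intro i _
    rw [hMK i]
    ring
  rw [rhs_eq, pascal_split (p+1)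
    (fun i => ((c+p+2).descFactorial (p+2-i) : ℝ) * ((v-u)^i * Kf g (p+1) (c+i) u v))]
  -- match the two sums
  have m1 : ∑ i ∈ Finset.range (p+2), ((p+1).choose i : ℝ) *
        (((c+p+2).descFactorial (p+2-i) : ℝ) * ((v-u)^i * Kf g (p+1) (c+i) u v))
      = ((c:ℝ)+p+2) * ∑ i ∈ Finset.range (p+2), (((p+1).choose i : ℝ)) *
          ((((p+1)+c).descFactorial (p+1-i) : ℝ) * ((v-u)^i * Kf g (p+1) (c+i) u v)) := by
    rw [Finset.mul_sum]
    apply Finset.sum_congr rfl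
    intro i hi
    have hip : i ≤ p + 1 := by
      simpa [Nat.lt_succ_iff] using Finset.mem_range.mp hi
    have hd : ((c+p+2).descFactorial (p+2-i) : ℝ)
        = ((c:ℝ)+p+2) * (((p+1)+c).descFactorial (p+1-i) : ℝ) := by
      rw [show (p:ℕ)+2-i = (p+1-i)+1 by omega, show (c:ℕ)+p+2 = (c+p+1)+1 by omega,
        Nat.succ_descFactorial_succ, show (p:ℕ)+1+c = c+p+1 by omega]
      push_cast
      ring
    rw [hd]
    ring
  have m2 : ∑ i ∈ Finset.range (p+2), ((p+1).choose i : ℝ) *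
        (((c+p+2).descFactorial (p+2-(i+1)) : ℝ) * ((v-u)^(i+1) * Kf g (p+1) (c+(i+1)) u v))
      = (v-u) * ∑ i ∈ Finset.range (p+2), (((p+1).choose i : ℝ)) *
          ((((p+1)+(c+1)).descFactorial (p+1-i) : ℝ) * ((v-u)^i * Kf g (p+1) ((c+1)+i) u v)) := by
    rw [Finset.mul_sum]
    apply Finset.sum_congr rfl
    intro i _
    rw [show (p:ℕ)+2-(i+1) = p+1-i by omega, show (p:ℕ)+1+(c+1) = c+p+2 by omega,
      show (c:ℕ)+(i+1) = (c+1)+i by omega]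
    ring
  rw [m1, m2]
end

section
/- Let g : ℝ → ℝ be smooth near l and, for u ≠ v, set M(u,v) = (g(v)-g(u))/(v-u) with mixed partials _iM_j(u,v) = ∂^{i+j}M/∂u^i∂v^j. Then for all nonnegative integers i, j: lim_{v → l⁺} C(i+j, i) · _iM_j(l, v) = g^{(i+j+1)}(l)/(i+j+1). -/
open Filter Set Topology

open intervalIntegral

noncomputable def Ibeta (g : ℝ → ℝ) (i j : ℕ) (u v : ℝ) : ℝ :=
  ∫ t in (0:ℝ)..1, (1-t)^i * t^j * iteratedDeriv (i+j+1) g (u + t*(v-u))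

variable {g : ℝ → ℝ}

theorem contG (hg : ContDiff ℝ (⊤ : ℕ∞) g) (n : ℕ) : Continuous (iteratedDeriv n g) :=
  hg.continuous_iteratedDeriv n (by exact_mod_cast le_top)

theorem derG (hg : ContDiff ℝ (⊤ : ℕ∞) g) (n : ℕ) (x : ℝ) :
    HasDerivAt (iteratedDeriv n g) (iteratedDeriv (n+1) g x) x := by
  rw [iteratedDeriv_succ]
  exact ((hg.differentiable_iteratedDeriv n (by exact_mod_cast ENat.coe_lt_top n)) x).hasDerivAt

theorem hasDerivAt_Ibeta_v (hg : ContDiff ℝ (⊤ : ℕ∞) g) (i j : ℕ) (u v₀ : ℝ) :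
    HasDerivAt (fun v => Ibeta g i j u v) (Ibeta g i (j+1) u v₀) v₀ := by
  set F : ℝ → ℝ → ℝ := fun x t => (1-t)^i * t^j * iteratedDeriv (i+j+1) g (u + t*(x-u)) with hF
  set F' : ℝ → ℝ → ℝ := fun x t => (1-t)^i * t^(j+1) * iteratedDeriv (i+j+2) g (u + t*(x-u)) with hF'
  have hGc := contG hg (i+j+1)
  have hG'c := contG hg (i+j+2)
  have hcF : ∀ x, Continuous (F x) := by
    intro x
    apply Continuous.mul
    · exact ((continuous_const.sub continuous_id).pow i).mul (continuous_id.pow j)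
    · exact hGc.comp (continuous_const.add (continuous_id.mul continuous_const))
  have hcF' : ∀ x, Continuous (F' x) := by
    intro x
    apply Continuous.mul
    · exact ((continuous_const.sub continuous_id).pow i).mul (continuous_id.pow (j+1))
    · exact hG'c.comp (continuous_const.add (continuous_id.mul continuous_const))
  -- bound
  set R : ℝ := |u| + (1 + |v₀ - u|) with hR
  obtain ⟨C, hC⟩ : ∃ C, ∀ y ∈ Icc (-R) R, |iteratedDeriv (i+j+2) g y| ≤ C :=
    (isCompact_Icc.exists_bound_of_continuousOn hG'c.continuousOn).imp
      (fun C h y hy => h y hy)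
  have key := hasDerivAt_integral_of_dominated_loc_of_deriv_le (F := F) (F' := F')
      (x₀ := v₀) (a := (0:ℝ)) (b := 1) (μ := MeasureTheory.volume) (bound := fun _ => |C|) (Metric.ball_mem_nhds v₀ one_pos)
      (Eventually.of_forall fun x => (hcF x).aestronglyMeasurable.restrict)
      ((hcF v₀).intervalIntegrable _ _)
      ((hcF' v₀).aestronglyMeasurable.restrict)
      ?_ (intervalIntegrable_const) ?_
  · exact key.2
  · -- bound
    refine Eventually.of_forall fun t ht x hx => ?_
    have ht' : t ∈ Set.Ioc (0:ℝ) 1 := by simpa [Set.uIoc_of_le (by norm_num : (0:ℝ) ≤ 1)] using ht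
    have h1 : |(1-t)^i * t^(j+1)| ≤ 1 := by
      rw [abs_mul, abs_pow, abs_pow]
      have : |1 - t| ≤ 1 := by rw [abs_le]; constructor <;> nlinarith [ht'.1, ht'.2]
      have h2 : |t| ≤ 1 := by rw [abs_le]; constructor <;> nlinarith [ht'.1, ht'.2]
      calc |1-t|^i * |t|^(j+1) ≤ 1^i * 1^(j+1) := by
            apply mul_le_mul (pow_le_pow_left₀ (abs_nonneg _) this i)
              (pow_le_pow_left₀ (abs_nonneg _) h2 _) (by positivity) (by norm_num)
        _ = 1 := by norm_num
    have harg : u + t*(x-u) ∈ Icc (-R) R := by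
      have hxd : |x - v₀| < 1 := by simpa [Real.dist_eq] using Metric.mem_ball.1 hx
      have h3 : |t * (x - u)| ≤ |x - u| := by
        rw [abs_mul]
        have : |t| ≤ 1 := by rw [abs_le]; constructor <;> nlinarith [ht'.1, ht'.2]
        nlinarith [abs_nonneg (x - u)]
      have h4 : |x - u| ≤ |x - v₀| + |v₀ - u| := abs_sub_le _ _ _
      have h5 : |u + t*(x-u)| ≤ R := by
        calc |u + t*(x-u)| ≤ |u| + |t*(x-u)| := abs_add_le _ _
          _ ≤ R := by rw [hR]; nlinarith
      rw [abs_le] at h5; exact ⟨h5.1, h5.2⟩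
    calc ‖F' x t‖ = |(1-t)^i * t^(j+1)| * |iteratedDeriv (i+j+2) g (u + t*(x-u))| := by
          rw [hF']; simp [Real.norm_eq_abs, abs_mul]
      _ ≤ 1 * |C| := by
          apply mul_le_mul h1 ((hC _ harg).trans (le_abs_self C)) (abs_nonneg _) zero_le_one
      _ = |C| := one_mul _
  · -- differentiability
    refine Eventually.of_forall fun t ht x hx => ?_
    have h1 : HasDerivAt (fun x => u + t*(x-u)) t x := by
      simpa using (((hasDerivAt_id x).sub_const u).const_mul t).const_add u
    have h2 := (derG hg (i+j+1) (u + t*(x-u))).comp x h1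
    have h3 := h2.const_mul ((1-t)^i * t^j)
    exact h3.congr_deriv (by rw [hF']; push_cast; ring)

theorem Ibeta_symm (g : ℝ → ℝ) (i j : ℕ) (u v : ℝ) : Ibeta g j i v u = Ibeta g i j u v := by
  have h := intervalIntegral.integral_comp_sub_left (a := (0:ℝ)) (b := 1)
    (fun s => (1-s)^i * s^j * iteratedDeriv (i+j+1) g (u + s*(v-u))) 1
  simp only [sub_zero, sub_self] at h
  rw [Ibeta, Ibeta, ← h]
  apply intervalIntegral.integral_congr
  intro t _
  have harg : v + t*(u-v) = u + (1-t)*(v-u) := by ring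
  beta_reduce
  rw [sub_sub_cancel, add_comm j i, ← harg]
  ring

theorem hasDerivAt_Ibeta_u {g : ℝ → ℝ} (hg : ContDiff ℝ (⊤ : ℕ∞) g) (i j : ℕ) (v u₀ : ℝ) :
    HasDerivAt (fun u => Ibeta g i j u v) (Ibeta g (i+1) j u₀ v) u₀ := by
  have h := hasDerivAt_Ibeta_v hg j i v u₀
  have h1 : (fun u => Ibeta g j i v u) = fun u => Ibeta g i j u v :=
    funext fun u => Ibeta_symm g i j u v
  have h2 : Ibeta g j (i+1) v u₀ = Ibeta g (i+1) j u₀ v := Ibeta_symm g (i+1) j u₀ v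
  rwa [h1, h2] at h

theorem iteratedDeriv_Ibeta_v {g : ℝ → ℝ} (hg : ContDiff ℝ (⊤ : ℕ∞) g) (i : ℕ) (u : ℝ) (j : ℕ) :
    iteratedDeriv j (fun v => Ibeta g i 0 u v) = fun v => Ibeta g i j u v := by
  induction j with
  | zero => simp [iteratedDeriv_zero]
  | succ j ih =>
    rw [iteratedDeriv_succ, ih]
    exact funext fun v => (hasDerivAt_Ibeta_v hg i j u v).deriv

theorem iteratedDeriv_Ibeta_u {g : ℝ → ℝ} (hg : ContDiff ℝ (⊤ : ℕ∞) g) (j : ℕ) (v : ℝ) (i : ℕ) :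
    iteratedDeriv i (fun u => Ibeta g 0 j u v) = fun u => Ibeta g i j u v := by
  induction i with
  | zero => simp [iteratedDeriv_zero]
  | succ i ih =>
    rw [iteratedDeriv_succ, ih]
    exact funext fun u => (hasDerivAt_Ibeta_u hg i j v u).deriv

theorem Ibeta_base {g : ℝ → ℝ} (hg : ContDiff ℝ (⊤ : ℕ∞) g) {u v : ℝ} (h : v ≠ u) :
    (g v - g u) / (v - u) = Ibeta g 0 0 u v := by
  have hc : v - u ≠ 0 := sub_ne_zero.2 h
  have hder : ∀ t ∈ Set.uIcc (0:ℝ) 1,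
      HasDerivAt (fun s => g (u + s*(v-u))) (deriv g (u + t*(v-u)) * (v-u)) t := by
    intro t _
    have h1 : HasDerivAt (fun s : ℝ => u + s*(v-u)) (v-u) t := by
      simpa using ((hasDerivAt_id t).mul_const (v-u)).const_add u
    exact (((hg.differentiable (by simp)) _).hasDerivAt).comp t h1
  have hdc : Continuous (deriv g) := by
    have := contG hg 1; rwa [iteratedDeriv_one] at this
  have hint : IntervalIntegrable (fun t => deriv g (u + t*(v-u)) * (v-u))
      MeasureTheory.volume 0 1 :=
    ((hdc.comp (continuous_const.add (continuous_id.mul continuous_const))).mul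
      continuous_const).intervalIntegrable _ _
  have hFTC := intervalIntegral.integral_eq_sub_of_hasDerivAt hder hint
  have e1 : u + 1*(v-u) = v := by ring
  have e0 : u + 0*(v-u) = u := by ring
  rw [e1, e0, intervalIntegral.integral_mul_const] at hFTC
  have hIb : Ibeta g 0 0 u v = ∫ t in (0:ℝ)..1, deriv g (u + t*(v-u)) := by
    apply intervalIntegral.integral_congr
    intro t _
    simp [iteratedDeriv_one]
  rw [hIb, div_eq_iff hc, ← hFTC]

theorem beta_val : ∀ (i j : ℕ), ∫ t in (0:ℝ)..1, (1-t)^i * t^j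
    = (Nat.factorial i * Nat.factorial j : ℝ) / (Nat.factorial (i+j+1)) := by
  intro i
  induction i with
  | zero =>
    intro j
    simp only [pow_zero, one_mul, integral_pow]
    rw [Nat.factorial_succ]
    push_cast
    rw [one_pow, zero_pow (by omega)]
    field_simp
    simp only [sub_zero, zero_add, Nat.factorial_zero, Nat.cast_one, one_mul, mul_one]
  | succ i ih =>
    intro j
    have hder : ∀ t ∈ Set.uIcc (0:ℝ) 1,
        HasDerivAt (fun t => (1-t)^(i+1) * t^(j+1))
          (-((i+1:ℕ) * (1-t)^i) * t^(j+1) + (1-t)^(i+1) * ((j+1:ℕ) * t^j)) t := by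
      intro t _
      have h1 : HasDerivAt (fun t : ℝ => (1-t)^(i+1)) (-((i+1:ℕ) * (1-t)^i)) t := by
        have h0 : HasDerivAt (fun t : ℝ => 1 - t) (-1) t := by
          simpa using (hasDerivAt_id t).const_sub 1
        have := h0.fun_pow (i+1)
        simpa [mul_comm] using this
      have h2 : HasDerivAt (fun t : ℝ => t^(j+1)) ((j+1:ℕ) * t^j) t := by
        simpa using hasDerivAt_pow (j+1) t
      exact h1.mul h2
    have hc1 : Continuous fun t : ℝ => -((i+1:ℕ) * (1-t)^i) * t^(j+1) := by continuity
    have hc2 : Continuous fun t : ℝ => (1-t)^(i+1) * ((j+1:ℕ) * t^j) := by continuity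
    have hFTC := intervalIntegral.integral_eq_sub_of_hasDerivAt hder
      ((hc1.add hc2).intervalIntegrable _ _)
    rw [intervalIntegral.integral_add (hc1.intervalIntegrable _ _)
      (hc2.intervalIntegrable _ _)] at hFTC
    simp only [sub_self, one_pow, zero_pow (Nat.succ_ne_zero _), sub_zero] at hFTC
    have e1 : (∫ t in (0:ℝ)..1, -((i+1:ℕ) * (1-t)^i) * t^(j+1))
        = -((i+1:ℕ) * ∫ t in (0:ℝ)..1, (1-t)^i * t^(j+1)) := by
      rw [← intervalIntegral.integral_const_mul, ← intervalIntegral.integral_neg]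
      apply intervalIntegral.integral_congr
      intro t _; ring
    have e2 : (∫ t in (0:ℝ)..1, (1-t)^(i+1) * ((j+1:ℕ) * t^j))
        = (j+1:ℕ) * ∫ t in (0:ℝ)..1, (1-t)^(i+1) * t^j := by
      rw [← intervalIntegral.integral_const_mul]
      apply intervalIntegral.integral_congr
      intro t _; ring
    rw [e1, e2, ih (j+1)] at hFTC
    have hsolve : (∫ t in (0:ℝ)..1, (1-t)^(i+1) * t^j)
        = ((i+1:ℕ) : ℝ) * ((Nat.factorial i * Nat.factorial (j+1) : ℝ)
            / (Nat.factorial (i+(j+1)+1))) / ((j+1:ℕ) : ℝ) := by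
      have hj : ((j+1:ℕ) : ℝ) ≠ 0 := by positivity
      field_simp at hFTC ⊢
      linarith [hFTC]
    rw [hsolve]
    have hidx : i + (j+1) + 1 = i + j + 2 := by omega
    have hidx2 : (i+1) + j + 1 = i + j + 2 := by omega
    rw [hidx, hidx2, Nat.factorial_succ (i+j+1)]
    rw [Nat.factorial_succ j, Nat.factorial_succ i]
    push_cast
    have h1 : (0:ℝ) < (i+j+1).factorial := by positivity
    field_simp

theorem Mmix_eq_Ibeta {g : ℝ → ℝ} (hg : ContDiff ℝ (⊤ : ℕ∞) g) (i j : ℕ) {l v : ℝ} (hv : v ≠ l) :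
    Mmix g i j l v = Ibeta g i j l v := by
  have inner : ∀ u' : ℝ, u' ≠ v →
      iteratedDeriv j (fun v' => (g v' - g u')/(v' - u')) v = Ibeta g 0 j u' v := by
    intro u' hu'
    have hev : (fun v' => (g v' - g u')/(v' - u')) =ᶠ[nhds v] fun v' => Ibeta g 0 0 u' v' := by
      filter_upwards [eventually_ne_nhds hu'.symm] with v' hv'
      exact Ibeta_base hg hv'
    calc iteratedDeriv j (fun v' => (g v' - g u')/(v' - u')) v
        = iteratedDeriv j (fun v' => Ibeta g 0 0 u' v') v := hev.iteratedDeriv_eq j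
      _ = Ibeta g 0 j u' v := congrFun (iteratedDeriv_Ibeta_v hg 0 u' j) v
  have outer : (fun u' => iteratedDeriv j (fun v' => (g v' - g u')/(v' - u')) v)
      =ᶠ[nhds l] fun u' => Ibeta g 0 j u' v := by
    filter_upwards [eventually_ne_nhds hv.symm] with u' hu'
    exact inner u' hu'
  rw [Mmix, outer.iteratedDeriv_eq i, congrFun (iteratedDeriv_Ibeta_u hg j v i) l]


/-- Lemma 2, first part:
`lim_{v→l⁺} C(i+j,i) · _iM_j(l,v) = g^{(i+j+1)}(l)/(i+j+1)`. -/
theorem stmt5 (g : ℝ → ℝ) (hg : ContDiff ℝ (⊤ : ℕ∞) g) (l : ℝ) (i j : ℕ) :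
    Tendsto (fun v => ((i + j).choose i : ℝ) * Mmix g i j l v)
      (nhdsWithin l (Set.Ioi l))
      (nhds (iteratedDeriv (i + j + 1) g l / (i + j + 1))) := by
  have hval : Ibeta g i j l l
      = iteratedDeriv (i+j+1) g l * ((Nat.factorial i * Nat.factorial j : ℝ)
          / (Nat.factorial (i+j+1))) := by
    have hcongr : Ibeta g i j l l = ∫ t in (0:ℝ)..1, (1-t)^i * t^j * iteratedDeriv (i+j+1) g l := by
      apply intervalIntegral.integral_congr
      intro t _
      simp
    rw [hcongr, intervalIntegral.integral_mul_const, beta_val i j]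
    ring
  have hcont : Tendsto (fun v => Ibeta g i j l v) (nhdsWithin l (Set.Ioi l))
      (nhds (Ibeta g i j l l)) :=
    (hasDerivAt_Ibeta_v hg i j l l).continuousAt.continuousWithinAt
  have hεq : (fun v => ((i + j).choose i : ℝ) * Ibeta g i j l v)
      =ᶠ[nhdsWithin l (Set.Ioi l)] fun v => ((i + j).choose i : ℝ) * Mmix g i j l v := by
    filter_upwards [self_mem_nhdsWithin] with v hv
    rw [Mmix_eq_Ibeta hg i j (ne_of_gt hv)]
  have hfin : ((i+j).choose i : ℝ) * Ibeta g i j l l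
      = iteratedDeriv (i + j + 1) g l / (i + j + 1) := by
    rw [hval]
    have h := Nat.choose_mul_factorial_mul_factorial (Nat.le_add_right i j)
    rw [Nat.add_sub_cancel_left] at h
    have hch : ((i+j).choose i : ℝ) * (Nat.factorial i * Nat.factorial j)
        = Nat.factorial (i+j) := by push_cast [← h]; ring
    rw [Nat.factorial_succ (i+j)]
    have h1 : ((i:ℝ) + j + 1) ≠ 0 := by positivity
    have h2 : ((i+j).factorial : ℝ) ≠ 0 := by positivity
    field_simp
    push_cast
    linear_combination iteratedDeriv (i + j + 1) g l * ((i:ℝ) + j + 1) * hch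
  have := hcont.const_mul ((i+j).choose i : ℝ)
  rw [hfin] at this
  exact this.congr' hεq
end

section
/- Let g : ℝ → ℝ be smooth near l, M(u,v) = (g(v)-g(u))/(v-u), _iM_j = ∂^{i+j}M/∂u^i∂v^j. Then for all nonnegative integers i, j: lim_{v → l⁺} _iM_j(l, v) = (i! · j!/(i+j)!) · lim_{v → l⁺} M_{i+j}(l, v), where M_{i+j} denotes the (i+j)-th partial derivative of M with respect to v only. -/
open Filter Set Topology

open MeasureTheory intervalIntegral

noncomputable def Phi (g : ℝ → ℝ) (i j : ℕ) (u v : ℝ) : ℝ :=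
  ∫ t in (0:ℝ)..1, (1-t)^i * t^j * iteratedDeriv (i+j+1) g (u + t*(v-u))

lemma param_hasDerivAt_s6 {G G' : ℝ → ℝ → ℝ}
    (hG : ∀ x, Continuous (G x))
    (hG' : Continuous fun p : ℝ × ℝ => G' p.1 p.2)
    (hd : ∀ t x, HasDerivAt (fun y => G y t) (G' x t) x) (x₀ : ℝ) :
    HasDerivAt (fun x => ∫ t in (0:ℝ)..1, G x t) (∫ t in (0:ℝ)..1, G' x₀ t) x₀ := by
  obtain ⟨C, hC⟩ := ((isCompact_Icc.prod isCompact_Icc) :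
      IsCompact (Icc (x₀-1) (x₀+1) ×ˢ Icc (0:ℝ) 1)).exists_bound_of_continuousOn
      hG'.continuousOn
  refine (intervalIntegral.hasDerivAt_integral_of_dominated_loc_of_deriv_le
    (F := G) (F' := G') (x₀ := x₀) (a := (0:ℝ)) (b := 1) (bound := fun _ => C)
    (s := Metric.ball x₀ 1) (Metric.ball_mem_nhds x₀ one_pos)
    (Filter.Eventually.of_forall fun x => (hG x).aestronglyMeasurable)
    ((hG x₀).intervalIntegrable 0 1)
    ((hG'.comp (continuous_const.prodMk continuous_id)).aestronglyMeasurable)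
    ?_ intervalIntegrable_const
    (Filter.Eventually.of_forall fun t _ x _ => hd t x)).2
  refine Filter.Eventually.of_forall fun t ht x hx => ?_
  have ht' : t ∈ Icc (0:ℝ) 1 := by
    have : Set.uIoc (0:ℝ) 1 = Ioc 0 1 := uIoc_of_le (by norm_num)
    exact Ioc_subset_Icc_self (this ▸ ht)
  have hx' : x ∈ Icc (x₀-1) (x₀+1) := by
    have := abs_lt.1 (by simpa [Real.dist_eq] using Metric.mem_ball.1 hx)
    constructor <;> linarith [this.1, this.2]
  exact hC (x, t) ⟨hx', ht'⟩

lemma hd_iter {g : ℝ → ℝ} (hg : ContDiff ℝ (⊤ : ℕ∞) g) (n : ℕ) (x : ℝ) :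
    HasDerivAt (iteratedDeriv n g) (iteratedDeriv (n+1) g x) x := by
  have h := ((hg.differentiable_iteratedDeriv n (by exact_mod_cast ENat.natCast_lt_top n)).differentiableAt (x := x)).hasDerivAt
  rwa [← iteratedDeriv_succ] at h

lemma cont_iter {g : ℝ → ℝ} (hg : ContDiff ℝ (⊤ : ℕ∞) g) (n : ℕ) :
    Continuous (iteratedDeriv n g) :=
  hg.continuous_iteratedDeriv n (by exact_mod_cast le_top)

lemma hasDerivAt_Phi_v {g : ℝ → ℝ} (hg : ContDiff ℝ (⊤ : ℕ∞) g) (i j : ℕ) (u v : ℝ) :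
    HasDerivAt (fun v' => Phi g i j u v') (Phi g i (j+1) u v) v := by
  have key := param_hasDerivAt_s6
    (G := fun x t => (1-t)^i * t^j * iteratedDeriv (i+j+1) g (u + t*(x-u)))
    (G' := fun x t => (1-t)^i * t^(j+1) * iteratedDeriv (i+j+2) g (u + t*(x-u)))
    (fun x => by
      have := cont_iter hg (i+j+1)
      fun_prop)
    (by
      have := cont_iter hg (i+j+2)
      fun_prop)
    (fun t x => by
      have h1 : HasDerivAt (fun y : ℝ => u + t*(y-u)) t x := by
        simpa using (((hasDerivAt_id x).sub_const u).const_mul t).const_add u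
      have h2 := ((hd_iter hg (i+j+1) (u + t*(x-u))).comp x h1).const_mul ((1-t)^i * t^j)
      exact h2.congr_deriv (by ring)) v
  exact key

lemma hasDerivAt_Phi_u {g : ℝ → ℝ} (hg : ContDiff ℝ (⊤ : ℕ∞) g) (i j : ℕ) (v u : ℝ) :
    HasDerivAt (fun u' => Phi g i j u' v) (Phi g (i+1) j u v) u := by
  have key := param_hasDerivAt_s6
    (G := fun x t => (1-t)^i * t^j * iteratedDeriv (i+j+1) g (x + t*(v-x)))
    (G' := fun x t => (1-t)^(i+1) * t^j * iteratedDeriv (i+j+2) g (x + t*(v-x)))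
    (fun x => by
      have := cont_iter hg (i+j+1)
      fun_prop)
    (by
      have := cont_iter hg (i+j+2)
      fun_prop)
    (fun t x => by
      have h1 : HasDerivAt (fun y : ℝ => y + t*(v-y)) (1-t) x := by
        exact ((hasDerivAt_id x).fun_add (((hasDerivAt_id x).const_sub v).const_mul t)).congr_deriv (by ring)
      have h2 := ((hd_iter hg (i+j+1) (x + t*(v-x))).comp x h1).const_mul ((1-t)^i * t^j)
      exact h2.congr_deriv (by ring)) u
  have he : (fun u' => Phi g i j u' v) = fun x => ∫ t in (0:ℝ)..1,
      (1-t)^i * t^j * iteratedDeriv (i+j+1) g (x + t*(v-x)) := rfl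
  rw [he]
  convert key using 1
  unfold Phi
  simp only [show i+1+j+1 = i+j+2 from by omega]

lemma beta_nat : ∀ (i j : ℕ), (∫ t in (0:ℝ)..1, (1-t)^i * t^j)
    = (Nat.factorial i * Nat.factorial j : ℝ) / Nat.factorial (i+j+1) := by
  intro i
  induction i with
  | zero =>
    intro j
    rw [show (fun t : ℝ => (1-t)^0 * t^j) = fun t : ℝ => t^j from by funext t; ring]
    rw [integral_pow]
    simp [Nat.factorial_succ]
    field_simp
  | succ i ih =>
    intro j
    have hj : ((j:ℝ)+1) ≠ 0 := by positivity
    have ibp := intervalIntegral.integral_mul_deriv_eq_deriv_mul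
      (a := (0:ℝ)) (b := 1)
      (u := fun t => (1-t)^(i+1)) (u' := fun t => -(((i:ℝ)+1) * (1-t)^i))
      (v := fun t => t^(j+1)/((j:ℝ)+1)) (v' := fun t => t^j)
      (fun x _ => by
        have h := ((hasDerivAt_id x).const_sub 1).fun_pow (i+1)
        exact h.congr_deriv (by simp))
      (fun x _ => by
        have h := (hasDerivAt_pow (j+1) x).div_const ((j:ℝ)+1)
        convert h using 1
        push_cast
        field_simp)
      (by apply Continuous.intervalIntegrable; continuity)
      (by apply Continuous.intervalIntegrable; continuity)
    have IH := ih (j+1)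
    rw [ibp]
    have h2 : (∫ x in (0:ℝ)..1, -(((i:ℝ)+1) * (1-x)^i) * (x^(j+1)/((j:ℝ)+1)))
        = (-((i:ℝ)+1)/((j:ℝ)+1)) * ∫ x in (0:ℝ)..1, (1-x)^i * x^(j+1) := by
      rw [← intervalIntegral.integral_const_mul]
      congr 1
      funext x
      field_simp
    rw [h2, IH]
    rw [show i+1+j+1 = i+(j+1)+1 from by omega]
    have hf : ((i+(j+1)+1).factorial : ℝ) ≠ 0 := by positivity
    push_cast [Nat.factorial_succ]
    norm_num
    field_simp
    ring

lemma M_eq_Phi {g : ℝ → ℝ} (hg : ContDiff ℝ (⊤ : ℕ∞) g) {u v : ℝ} (h : u ≠ v) :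
    (g v - g u)/(v - u) = Phi g 0 0 u v := by
  have h0 : v - u ≠ 0 := sub_ne_zero.2 (Ne.symm h)
  have h1 : Phi g 0 0 u v = ∫ t in (0:ℝ)..1, deriv g ((v-u)*t + u) := by
    unfold Phi
    congr 1
    funext t
    rw [iteratedDeriv_one]
    ring_nf
  rw [h1, intervalIntegral.integral_comp_mul_add (f := deriv g) h0 u]
  rw [intervalIntegral.integral_deriv_eq_sub
    (fun x _ => (hg.differentiable (by simp)).differentiableAt)]
  · simp [smul_eq_mul]
    rw [div_eq_inv_mul]
  · apply Continuous.intervalIntegrable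
    have := cont_iter hg 1
    rwa [iteratedDeriv_one] at this

lemma claim4 {g : ℝ → ℝ} (hg : ContDiff ℝ (⊤ : ℕ∞) g) :
    ∀ (j : ℕ) (u v : ℝ), u ≠ v →
      iteratedDeriv j (fun v' => (g v' - g u) / (v' - u)) v = Phi g 0 j u v := by
  intro j
  induction j with
  | zero =>
    intro u v huv
    rw [iteratedDeriv_zero]
    exact M_eq_Phi hg huv
  | succ j ih =>
    intro u v huv
    rw [iteratedDeriv_succ]
    have hev : (iteratedDeriv j (fun v' => (g v' - g u) / (v' - u)))
        =ᶠ[nhds v] (fun v' => Phi g 0 j u v') := by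
      filter_upwards [isOpen_ne.mem_nhds  (by simpa using huv.symm : v ≠ u)] with x hx
      exact ih u x (Ne.symm hx)
    rw [hev.deriv_eq, (hasDerivAt_Phi_v hg 0 j u v).deriv]

lemma claim5 {g : ℝ → ℝ} (hg : ContDiff ℝ (⊤ : ℕ∞) g) :
    ∀ (i j : ℕ) (u v : ℝ), u ≠ v → Mmix g i j u v = Phi g i j u v := by
  intro i
  induction i with
  | zero =>
    intro j u v huv
    rw [Mmix, iteratedDeriv_zero]
    exact claim4 hg j u v huv
  | succ i ih =>
    intro j u v huv
    rw [Mmix, iteratedDeriv_succ]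
    have hev : (iteratedDeriv i
          (fun u' => iteratedDeriv j (fun v' => (g v' - g u') / (v' - u')) v))
        =ᶠ[nhds u] (fun u' => Phi g i j u' v) := by
      filter_upwards [isOpen_ne.mem_nhds huv] with x hx
      exact ih j x v hx
    rw [hev.deriv_eq, (hasDerivAt_Phi_u hg i j v u).deriv]

lemma Phi_diag {g : ℝ → ℝ} (i j : ℕ) (l : ℝ) :
    Phi g i j l l = (Nat.factorial i * Nat.factorial j : ℝ) / Nat.factorial (i+j+1)
      * iteratedDeriv (i+j+1) g l := by
  unfold Phi
  have : (fun t : ℝ => (1-t)^i * t^j * iteratedDeriv (i+j+1) g (l + t*(l-l)))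
      = fun t : ℝ => (1-t)^i * t^j * iteratedDeriv (i+j+1) g l := by
    funext t; ring_nf
  rw [this, intervalIntegral.integral_mul_const, beta_nat]

/-- `lim_{v→l⁺} _iM_j(l,v) = (i!·j!/(i+j)!) · lim_{v→l⁺} M_{i+j}(l,v)`,
where `M_n(l,v)` is the `n`-th partial derivative of `M` in `v` only. -/
theorem stmt6 (g : ℝ → ℝ) (hg : ContDiff ℝ (⊤ : ℕ∞) g) (l : ℝ) (i j : ℕ) (L : ℝ)
    (hL : Tendsto (fun v => Mmix g 0 (i + j) l v) (nhdsWithin l (Set.Ioi l)) (nhds L)) :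
    Tendsto (fun v => Mmix g i j l v) (nhdsWithin l (Set.Ioi l))
      (nhds ((i.factorial : ℝ) * (j.factorial : ℝ) / ((i + j).factorial : ℝ) * L)) := by
  have hMP : ∀ i' j' : ℕ, Tendsto (fun v => Mmix g i' j' l v) (nhdsWithin l (Set.Ioi l))
      (nhds (Phi g i' j' l l)) := by
    intro i' j'
    have hc : Tendsto (fun v => Phi g i' j' l v) (nhdsWithin l (Set.Ioi l))
        (nhds (Phi g i' j' l l)) :=
      ((hasDerivAt_Phi_v hg i' j' l l).continuousAt.tendsto).mono_left nhdsWithin_le_nhds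
    refine hc.congr' ?_
    filter_upwards [self_mem_nhdsWithin] with v hv
    exact (claim5 hg i' j' l v (ne_of_lt hv)).symm
  have hLeq : L = Phi g 0 (i + j) l l := tendsto_nhds_unique hL (hMP 0 (i + j))
  have key := hMP i j
  have harith : Phi g i j l l
      = (i.factorial : ℝ) * (j.factorial : ℝ) / ((i + j).factorial : ℝ) * Phi g 0 (i + j) l l := by
    rw [Phi_diag, Phi_diag]
    rw [show 0 + (i+j) + 1 = i + j + 1 from by omega]
    have h1 : ((i+j).factorial : ℝ) ≠ 0 := by positivity
    have h2 : ((i+j+1).factorial : ℝ) ≠ 0 := by positivity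
    field_simp
    ring
  rw [hLeq, ← harith]
  exact key
end

section
/- Let k, r be positive integers and u < v real. For the function g(x) = x^{k+r}/(k+r)!, writing M(u,v) = (g(v)-g(u))/(v-u) and _iM_j = ∂^{i+j}M/∂u^i∂v^j, one has C(k+r-2, k-1) · _{r-1}M_{k-1}(u,v) = (1/(k+r-1)) · (r·u + k·v)/(k+r). -/
/-!
Off the diagonal, `(v ^ n - u ^ n) / (v - u) = ∑_{m < n} v ^ m u ^ (n - 1 - m)` locally in both
variables, so `M` is a polynomial near `(u, v)` and its mixed derivatives are computed termwise.
For `n = k + r`, the operator `∂_u^{r-1} ∂_v^{k-1}` kills every monomial except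
`v ^ (k - 1) u ^ r` and `v ^ k u ^ (r - 1)`, which leaves a linear function of `u` and `v`.
-/

open Filter Set Topology

open Finset

section

variable {𝕜 : Type*} [NontriviallyNormedField 𝕜]

theorem iteratedDeriv_sum_const_mul_pow {ι : Type*} (s : Finset ι) (c : ι → 𝕜) (m : ι → ℕ)
    (j : ℕ) (x : 𝕜) :
    iteratedDeriv j (fun y => ∑ i ∈ s, c i * y ^ m i) x =
      ∑ i ∈ s, c i * ((m i).descFactorial j * x ^ (m i - j)) := by
  rw [iteratedDeriv_fun_sum fun i _ => by fun_prop]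
  simp only [iteratedDeriv_const_mul_field, iteratedDeriv_pow]

theorem pow_div_sub_pow_div_div_sub {u v : 𝕜} (h : v ≠ u) (n : ℕ) (c : 𝕜) :
    (v ^ n / c - u ^ n / c) / (v - u) = ∑ m ∈ range n, u ^ (n - 1 - m) / c * v ^ m := by
  rw [← sub_div, div_right_comm, ← geom₂_sum h, sum_div]
  exact sum_congr rfl fun m _ => by ring

end

theorem Mmix_pow_div (n i j : ℕ) (c : ℝ) {u v : ℝ} (huv : u ≠ v) :
    Mmix (fun x => x ^ (n + 1) / c) i j u v =
      (∑ m ∈ range (n + 1), (m.descFactorial j * (n - m).descFactorial i : ℝ) *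
        v ^ (m - j) * u ^ (n - m - i)) / c := by
  have inner : ∀ u' ≠ v,
      iteratedDeriv j (fun v' => (v' ^ (n + 1) / c - u' ^ (n + 1) / c) / (v' - u')) v =
        ∑ m ∈ range (n + 1), m.descFactorial j * v ^ (m - j) / c * u' ^ (n - m) := by
    intro u' hu'
    have hloc : (fun v' => (v' ^ (n + 1) / c - u' ^ (n + 1) / c) / (v' - u')) =ᶠ[𝓝 v]
        fun v' => ∑ m ∈ range (n + 1), u' ^ (n - m) / c * v' ^ m := by
      filter_upwards [eventually_ne_nhds hu'.symm] with v' hv'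
      simpa using pow_div_sub_pow_div_div_sub hv' (n + 1) c
    rw [hloc.iteratedDeriv_eq, iteratedDeriv_sum_const_mul_pow]
    exact sum_congr rfl fun m _ => by ring
  have outer : (fun u' => iteratedDeriv j
        (fun v' => (v' ^ (n + 1) / c - u' ^ (n + 1) / c) / (v' - u')) v) =ᶠ[𝓝 u]
      fun u' => ∑ m ∈ range (n + 1), m.descFactorial j * v ^ (m - j) / c * u' ^ (n - m) := by
    filter_upwards [eventually_ne_nhds huv] with u' hu'
    exact inner u' hu'
  rw [Mmix, outer.iteratedDeriv_eq, iteratedDeriv_sum_const_mul_pow, sum_div]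
  exact sum_congr rfl fun m _ => by ring

theorem Nat.succ_descFactorial_self (n : ℕ) : (n + 1).descFactorial n = (n + 1).factorial := by
  simpa using Nat.factorial_mul_descFactorial n.le_succ

theorem sum_range_descFactorial_mul_descFactorial {R : Type*} [CommRing R] (K L : ℕ) (x y : R) :
    ∑ m ∈ range (K + L + 1 + 1), (m.descFactorial K * (K + L + 1 - m).descFactorial L : R) *
        y ^ (m - K) * x ^ (K + L + 1 - m - L) =
      K.factorial * (L + 1).factorial * x + (K + 1).factorial * L.factorial * y := by
  rw [sum_eq_add_of_mem K (K + 1) (by simp; omega) (by simp) (by omega)]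
  · simp only [show K + L + 1 - K = L + 1 by omega, show K + L + 1 - (K + 1) = L by omega,
      Nat.descFactorial_self, Nat.succ_descFactorial_self, Nat.sub_self, Nat.add_sub_cancel_left,
      pow_zero, pow_one]
    ring
  · intro m hm hne
    rcases Nat.lt_or_ge m K with h | h
    · simp [Nat.descFactorial_eq_zero_iff_lt.mpr h]
    · have : K + L + 1 - m < L := by simp at hm; omega
      simp [Nat.descFactorial_eq_zero_iff_lt.mpr this]

/-- for `g(x) = x^{k+r}/(k+r)!`,
`C(k+r-2, k-1) · _{r-1}M_{k-1}(u,v) = (1/(k+r-1)) · (ru + kv)/(k+r)`. -/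
theorem stmt12 (k r : ℕ) (hk : 1 ≤ k) (hr : 1 ≤ r) (u v : ℝ) (huv : u < v) :
    ((k + r - 2).choose (k - 1) : ℝ) *
        Mmix (fun x => x ^ (k + r) / ((k + r).factorial : ℝ)) (r - 1) (k - 1) u v =
      (1 / ((k : ℝ) + r - 1)) * (((r : ℝ) * u + k * v) / ((k : ℝ) + r)) := by
  obtain ⟨K, rfl⟩ : ∃ K, k = K + 1 := ⟨k - 1, by omega⟩
  obtain ⟨L, rfl⟩ : ∃ L, r = L + 1 := ⟨r - 1, by omega⟩
  rw [show K + 1 + (L + 1) = K + L + 1 + 1 by ring, show K + L + 1 + 1 - 2 = K + L by omega,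
    Nat.add_sub_cancel, Nat.add_sub_cancel, Mmix_pow_div _ _ _ _ huv.ne,
    sum_range_descFactorial_mul_descFactorial]
  have hchoose : ((K + L).choose K * L.factorial * K.factorial : ℝ) = (K + L).factorial := by
    rw [add_comm K L]
    exact_mod_cast Nat.add_choose_mul_factorial_mul_factorial L K
  simp only [Nat.factorial_succ, Nat.cast_mul, Nat.cast_add, Nat.cast_one]
  rw [show (K : ℝ) + 1 + (L + 1) - 1 = K + L + 1 by ring,
    show (K : ℝ) + 1 + (L + 1) = K + L + 1 + 1 by ring]
  field_simp
  linear_combination ((L + 1 : ℝ) * u + (K + 1) * v) * hchoose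
end

section
/- Let k, r be positive integers and 0 < u < v. For the function g(x) = (-1)^{k+r-1}/((k+r-1)! · x), writing M(u,v) = (g(v)-g(u))/(v-u) and _iM_j = ∂^{i+j}M/∂u^i∂v^j, one has C(k+r-2, k-1) · _{r-1}M_{k-1}(u,v) = 1/((k+r-1) · u^r · v^k). -/
/-!
For `g x = c / x` the divided difference `(g v - g u)/(v - u)` equals `-c · u⁻¹ · v⁻¹` away
from the diagonal, so near `(u, v)` it separates into a function of `u` times a function of `v`
and the mixed derivative `_iM_j` is `-c` times the product of the `i`-th derivative of `u⁻¹`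
and the `j`-th derivative of `v⁻¹`, i.e. `-c (-1)^{i+j} i! j! / (u^{i+1} v^{j+1})`. With
`c = (-1)^{i+j+1}/(i+j+1)!` the sign cancels and `C(i+j, j) i! j! / (i+j+1)! = 1/(i+j+1)`.
-/

open Filter Set Topology

open Nat

section

variable {𝕜 : Type*} [NontriviallyNormedField 𝕜]

theorem iteratedDeriv_inv (n : ℕ) (x : 𝕜) :
    iteratedDeriv n Inv.inv x = (-1) ^ n * n ! * (x ^ (n + 1))⁻¹ := by
  rw [iteratedDeriv_eq_iterate, iter_deriv_inv,
    show (-1 - n : ℤ) = -((n + 1 : ℕ) : ℤ) by push_cast; ring, zpow_neg, zpow_natCast]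

theorem iteratedDeriv_iteratedDeriv_of_eventually_eq_mul {F : 𝕜 → 𝕜 → 𝕜} {f h : 𝕜 → 𝕜}
    {u v : 𝕜} (hF : ∀ᶠ p in 𝓝 (u, v), F p.1 p.2 = f p.1 * h p.2) (i j : ℕ) :
    iteratedDeriv i (fun u' => iteratedDeriv j (F u') v) u =
      iteratedDeriv i f u * iteratedDeriv j h v := by
  have hinner : (fun u' => iteratedDeriv j (F u') v) =ᶠ[𝓝 u]
      fun u' => f u' * iteratedDeriv j h v := by
    filter_upwards [hF.curry_nhds] with u' hu'
    rw [EventuallyEq.iteratedDeriv_eq j (g := (f u' * h ·)) hu', iteratedDeriv_const_mul_field]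
  rw [hinner.iteratedDeriv_eq, iteratedDeriv_mul_const_field]

end

theorem const_div_sub_div_div_sub {K : Type*} [Field K] (c : K) {u v : K} (hu : u ≠ 0)
    (hv : v ≠ 0) (huv : u ≠ v) :
    (c / v - c / u) / (v - u) = -c * u⁻¹ * v⁻¹ := by
  have : v - u ≠ 0 := sub_ne_zero.2 huv.symm
  field_simp
  ring

theorem Mmix_const_div (c : ℝ) (i j : ℕ) {u v : ℝ} (hu : u ≠ 0) (hv : v ≠ 0) (huv : u ≠ v) :
    Mmix (fun x => c / x) i j u v =
      -c * (-1) ^ (i + j) * i ! * j ! / (u ^ (i + 1) * v ^ (j + 1)) := by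
  have hsep : ∀ᶠ p in 𝓝 (u, v),
      (c / p.2 - c / p.1) / (p.2 - p.1) = (-c * p.1⁻¹) * p.2⁻¹ := by
    filter_upwards [continuous_fst.continuousAt.eventually_ne hu,
      continuous_snd.continuousAt.eventually_ne hv,
      (continuous_fst.sub continuous_snd).continuousAt.eventually_ne (sub_ne_zero.2 huv)]
      with p hp1 hp2 hp12
    exact const_div_sub_div_div_sub c hp1 hp2 (sub_ne_zero.1 hp12)
  rw [Mmix,
    iteratedDeriv_iteratedDeriv_of_eventually_eq_mul (f := (-c * ·⁻¹)) (h := Inv.inv) hsep,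
    iteratedDeriv_const_mul_field (-c) Inv.inv, iteratedDeriv_inv, iteratedDeriv_inv]
  field_simp
  ring

/-- for `g(x) = (-1)^{k+r-1}/((k+r-1)!·x)` and `0 < u < v`,
`C(k+r-2, k-1) · _{r-1}M_{k-1}(u,v) = 1/((k+r-1)·u^r·v^k)`. -/
theorem stmt13 (k r : ℕ) (hk : 1 ≤ k) (hr : 1 ≤ r) (u v : ℝ)
    (hu : 0 < u) (huv : u < v) :
    ((k + r - 2).choose (k - 1) : ℝ) *
        Mmix (fun x => (-1 : ℝ) ^ (k + r - 1) / (((k + r - 1).factorial : ℝ) * x))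
          (r - 1) (k - 1) u v =
      1 / (((k : ℝ) + r - 1) * u ^ r * v ^ k) := by
  obtain ⟨j, rfl⟩ : ∃ j, k = j + 1 := ⟨k - 1, by omega⟩
  obtain ⟨i, rfl⟩ : ∃ i, r = i + 1 := ⟨r - 1, by omega⟩
  have hsub_one : j + 1 + (i + 1) - 1 = j + i + 1 := by omega
  have hsub_two : j + 1 + (i + 1) - 2 = j + i := by omega
  simp only [hsub_one, hsub_two, Nat.add_sub_cancel]
  have hc : -((-1 : ℝ) ^ (j + i + 1) / (j + i + 1)!) * (-1) ^ (i + j) = 1 / (j + i + 1)! := by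
    have hsq : (-1 : ℝ) ^ (j + i) * (-1) ^ (j + i) = 1 := by
      rw [← pow_add, ← two_mul, pow_mul]
      norm_num
    rw [add_comm i j]
    linear_combination (1 / (j + i + 1)! : ℝ) * hsq
  simp only [← div_div]
  rw [Mmix_const_div _ i j hu.ne' (hu.trans huv).ne' huv.ne, hc, cast_add_choose,
    factorial_succ]
  push_cast
  rw [show (j : ℝ) + 1 + (i + 1) - 1 = j + i + 1 by ring]
  field_simp
end

section
/- Let k, r be positive integers, u < v, and g : ℝ → ℝ smooth on [u, v]. Then ((k+r-1)!/((k-1)!(r-1)!)) · ∫_0^1 g^{(k+r-1)}(u + (v-u)t) · t^{k-1} · (1-t)^{r-1} dt = (k+r-1) · C(k+r-2, k-1) · _{r-1}M_{k-1}(u, v), where M(u,v) = (g(v)-g(u))/(v-u) and _iM_j = ∂^{i+j}M/∂u^i∂v^j. Equivalently: the conditional expectation E[g^{(k+r-1)}(R)/(k+r-1)] for R = u + (v-u)B with B ~ Beta(k,r) equals C(k+r-2,k-1) · _{r-1}M_{k-1}(u,v). -/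
open Filter Set Topology MeasureTheory

lemma paramHasDerivAt (f f' : ℝ → ℝ) (hf : ∀ x, HasDerivAt f (f' x) x)
    (hf' : Continuous f') (m c w : ℝ → ℝ) (hm : Continuous m) (hc : Continuous c)
    (hw : Continuous w) (x₀ : ℝ) :
    HasDerivAt (fun x => ∫ t in Set.Ioo (0:ℝ) 1, f (x * m t + c t) * w t)
      (∫ t in Set.Ioo (0:ℝ) 1, f' (x₀ * m t + c t) * m t * w t) x₀ := by
  have hfc : Continuous f := Differentiable.continuous (fun x => (hf x).differentiableAt)
  obtain ⟨Cm, hCm⟩ := (isCompact_Icc (a := (0:ℝ)) (b := 1)).exists_bound_of_continuousOn hm.continuousOn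
  obtain ⟨Cc, hCc⟩ := (isCompact_Icc (a := (0:ℝ)) (b := 1)).exists_bound_of_continuousOn hc.continuousOn
  obtain ⟨Cw, hCw⟩ := (isCompact_Icc (a := (0:ℝ)) (b := 1)).exists_bound_of_continuousOn hw.continuousOn
  set R : ℝ := (|x₀| + 1) * Cm + Cc with hR
  obtain ⟨Cf, hCf⟩ := (isCompact_Icc (a := -R) (b := R)).exists_bound_of_continuousOn hf'.continuousOn
  have hCm0 : 0 ≤ Cm := le_trans (norm_nonneg _) (hCm 0 (by norm_num))
  have hCc0 : 0 ≤ Cc := le_trans (norm_nonneg _) (hCc 0 (by norm_num))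
  have hCw0 : 0 ≤ Cw := le_trans (norm_nonneg _) (hCw 0 (by norm_num))
  have hR0 : 0 ≤ R := by positivity
  have hCf0 : 0 ≤ Cf := le_trans (norm_nonneg _) (hCf 0 (by constructor <;> linarith))
  have key := hasDerivAt_integral_of_dominated_loc_of_deriv_le
    (F := fun x t => f (x * m t + c t) * w t)
    (F' := fun x t => f' (x * m t + c t) * m t * w t)
    (μ := volume.restrict (Set.Ioo (0:ℝ) 1))
    (bound := fun _ => Cf * Cm * Cw) (x₀ := x₀) (Metric.ball_mem_nhds x₀ one_pos)
    ?_ ?_ ?_ ?_ ?_ ?_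
  · exact key.2
  · filter_upwards with x
    exact ((hfc.comp ((continuous_const.mul hm).add hc)).mul hw).aestronglyMeasurable
  · exact (((hfc.comp ((continuous_const.mul hm).add hc)).mul hw).integrableOn_Icc).mono_set
      Set.Ioo_subset_Icc_self
  · exact (((hf'.comp ((continuous_const.mul hm).add hc)).mul hm).mul hw).aestronglyMeasurable
  · rw [ae_restrict_iff' measurableSet_Ioo]
    filter_upwards with t ht
    intro x hx
    have htI : t ∈ Set.Icc (0:ℝ) 1 := ⟨le_of_lt ht.1, le_of_lt ht.2⟩
    have hxb : |x| ≤ |x₀| + 1 := by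
      have := mem_ball_iff_norm.mp hx
      have := abs_sub_abs_le_abs_sub x x₀
      simp only [Real.norm_eq_abs] at *
      linarith
    have harg : x * m t + c t ∈ Set.Icc (-R) R := by
      have h1 : |x * m t + c t| ≤ R := by
        calc |x * m t + c t| ≤ |x| * |m t| + |c t| := by
              refine le_trans (abs_add_le _ _) ?_
              rw [abs_mul]
          _ ≤ (|x₀| + 1) * Cm + Cc := by
              have := hCm t htI; have := hCc t htI
              simp only [Real.norm_eq_abs] at *
              have : |x| * |m t| ≤ (|x₀| + 1) * Cm := by
                apply mul_le_mul hxb (hCm t htI) (abs_nonneg _) (by positivity)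
              linarith [hCc t htI]
      exact abs_le.mp h1
    calc ‖f' (x * m t + c t) * m t * w t‖ = |f' (x * m t + c t)| * |m t| * |w t| := by
          simp [abs_mul]
      _ ≤ Cf * Cm * Cw := by
          have h1 := hCf _ harg; have h2 := hCm t htI; have h3 := hCw t htI
          simp only [Real.norm_eq_abs] at *
          apply mul_le_mul (mul_le_mul h1 h2 (abs_nonneg _) hCf0) h3 (abs_nonneg _)
          positivity
  · exact (integrableOn_const_iff).mpr (Or.inr measure_Ioo_lt_top)
  · filter_upwards with t
    intro x hx
    have h1 : HasDerivAt (fun x => x * m t + c t) (m t) x := by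
      simpa using ((hasDerivAt_id x).mul_const (m t)).add_const (c t)
    exact ((hf (x * m t + c t)).comp x h1).mul_const (w t)

noncomputable def Jint (g : ℝ → ℝ) (i j : ℕ) (u v : ℝ) : ℝ :=
  ∫ t in Set.Ioo (0:ℝ) 1,
    iteratedDeriv (i + j + 1) g (u + (v - u) * t) * t ^ j * (1 - t) ^ i

lemma itdContDiff (g : ℝ → ℝ) (hg : ContDiff ℝ (⊤ : ℕ∞) g) (n : ℕ) :
    ContDiff ℝ (⊤ : ℕ∞) (iteratedDeriv n g) := by
  rw [iteratedDeriv_eq_iterate]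
  exact ContDiff.iterate_deriv n (hg.of_le (by simp))

lemma itdHasDeriv (g : ℝ → ℝ) (hg : ContDiff ℝ (⊤ : ℕ∞) g) (n : ℕ) (x : ℝ) :
    HasDerivAt (iteratedDeriv n g) (iteratedDeriv (n + 1) g x) x := by
  have h := ((itdContDiff g hg n).differentiable (by simp) x).hasDerivAt
  rwa [iteratedDeriv_succ]

lemma hasDerivAt_J_v (g : ℝ → ℝ) (hg : ContDiff ℝ (⊤ : ℕ∞) g) (i j : ℕ) (u v : ℝ) :
    HasDerivAt (fun v' => Jint g i j u v') (Jint g i (j + 1) u v) v := by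
  have key := paramHasDerivAt (iteratedDeriv (i + j + 1) g) (iteratedDeriv (i + j + 2) g)
    (fun x => by simpa using itdHasDeriv g hg (i + j + 1) x)
    (itdContDiff g hg (i + j + 2)).continuous
    (fun t => t) (fun t => u - u * t) (fun t => t ^ j * (1 - t) ^ i)
    continuous_id (by continuity) (by continuity) v
  have e1 : (fun x => ∫ t in Set.Ioo (0:ℝ) 1,
      iteratedDeriv (i + j + 1) g (x * t + (u - u * t)) * (t ^ j * (1 - t) ^ i))
      = fun x => Jint g i j u x := by
    funext x
    unfold Jint
    congr 1
    funext t
    have : x * t + (u - u * t) = u + (x - u) * t := by ring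
    rw [this, mul_assoc]
  have e2 : (∫ t in Set.Ioo (0:ℝ) 1,
      iteratedDeriv (i + j + 2) g (v * t + (u - u * t)) * t * (t ^ j * (1 - t) ^ i))
      = Jint g i (j + 1) u v := by
    unfold Jint
    congr 1
    funext t
    have h1 : v * t + (u - u * t) = u + (v - u) * t := by ring
    have h2 : i + (j + 1) + 1 = i + j + 2 := by ring
    rw [h1, h2]
    ring
  rw [e1, e2] at key
  exact key

lemma hasDerivAt_J_u (g : ℝ → ℝ) (hg : ContDiff ℝ (⊤ : ℕ∞) g) (i j : ℕ) (u v : ℝ) :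
    HasDerivAt (fun u' => Jint g i j u' v) (Jint g (i + 1) j u v) u := by
  have key := paramHasDerivAt (iteratedDeriv (i + j + 1) g) (iteratedDeriv (i + j + 2) g)
    (fun x => by simpa using itdHasDeriv g hg (i + j + 1) x)
    (itdContDiff g hg (i + j + 2)).continuous
    (fun t => 1 - t) (fun t => v * t) (fun t => t ^ j * (1 - t) ^ i)
    (by continuity) (by continuity) (by continuity) u
  have e1 : (fun x => ∫ t in Set.Ioo (0:ℝ) 1,
      iteratedDeriv (i + j + 1) g (x * (1 - t) + v * t) * (t ^ j * (1 - t) ^ i))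
      = fun x => Jint g i j x v := by
    funext x
    unfold Jint
    congr 1
    funext t
    have : x * (1 - t) + v * t = x + (v - x) * t := by ring
    rw [this, mul_assoc]
  have e2 : (∫ t in Set.Ioo (0:ℝ) 1,
      iteratedDeriv (i + j + 2) g (u * (1 - t) + v * t) * (1 - t) * (t ^ j * (1 - t) ^ i))
      = Jint g (i + 1) j u v := by
    unfold Jint
    congr 1
    funext t
    have h1 : u * (1 - t) + v * t = u + (v - u) * t := by ring
    have h2 : i + 1 + j + 1 = i + j + 2 := by ring
    rw [h1, h2]
    ring
  rw [e1, e2] at key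
  exact key

lemma baseM (g : ℝ → ℝ) (hg : ContDiff ℝ (⊤ : ℕ∞) g) (u v : ℝ) (huv : u < v) :
    (g v - g u) / (v - u) = Jint g 0 0 u v := by
  have hne : v - u ≠ 0 := sub_ne_zero.mpr (ne_of_gt huv)
  have hdiff : ∀ x : ℝ, HasDerivAt g (deriv g x) x :=
    fun x => ((hg.differentiable (by simp)) x).hasDerivAt
  have hder : ∀ t ∈ Set.uIcc (0:ℝ) 1,
      HasDerivAt (fun t => g (u + (v - u) * t)) (deriv g (u + (v - u) * t) * (v - u)) t := by
    intro t _
    have h1 : HasDerivAt (fun t : ℝ => u + (v - u) * t) (v - u) t := by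
      simpa using ((hasDerivAt_id t).const_mul (v - u)).const_add u
    exact (hdiff (u + (v - u) * t)).comp t h1
  have hcd : Continuous (deriv g) := by
    have := itdContDiff g hg 1
    rw [iteratedDeriv_one] at this
    exact this.continuous
  have hint : IntervalIntegrable (fun t => deriv g (u + (v - u) * t) * (v - u)) volume 0 1 :=
    Continuous.intervalIntegrable ((hcd.comp (by continuity)).mul continuous_const) _ _
  have hFTC := intervalIntegral.integral_eq_sub_of_hasDerivAt hder hint
  simp only [mul_one, mul_zero, add_zero] at hFTC
  have h2 : (∫ t in (0:ℝ)..1, deriv g (u + (v - u) * t) * (v - u))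
      = (∫ t in (0:ℝ)..1, deriv g (u + (v - u) * t)) * (v - u) :=
    intervalIntegral.integral_mul_const _ _
  have h3 : (∫ t in (0:ℝ)..1, deriv g (u + (v - u) * t)) = (g v - g u) / (v - u) := by
    rw [h2] at hFTC
    field_simp at hFTC ⊢
    rw [show u + (v - u) = v by ring] at hFTC
    linarith [hFTC]
  unfold Jint
  rw [← h3]
  rw [intervalIntegral.integral_of_le (by norm_num : (0:ℝ) ≤ 1),
    MeasureTheory.integral_Ioc_eq_integral_Ioo]
  simp [iteratedDeriv_one]

lemma lemA_s16 (g : ℝ → ℝ) (hg : ContDiff ℝ (⊤ : ℕ∞) g) (j : ℕ) :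
    ∀ u v : ℝ, u < v →
      iteratedDeriv j (fun v' => (g v' - g u) / (v' - u)) v = Jint g 0 j u v := by
  induction j with
  | zero => intro u v huv; simpa using baseM g hg u v huv
  | succ j ih =>
    intro u v huv
    rw [iteratedDeriv_succ]
    have hev : (iteratedDeriv j (fun v' => (g v' - g u) / (v' - u)))
        =ᶠ[𝓝 v] (fun v' => Jint g 0 j u v') := by
      have hopen : IsOpen {v' : ℝ | u < v'} := isOpen_lt continuous_const continuous_id
      filter_upwards [hopen.mem_nhds huv] with v' hv'
      exact ih u v' hv'
    rw [hev.deriv_eq]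
    exact (hasDerivAt_J_v g hg 0 j u v).deriv

lemma lemB (g : ℝ → ℝ) (hg : ContDiff ℝ (⊤ : ℕ∞) g) (j : ℕ) (i : ℕ) :
    ∀ u v : ℝ, iteratedDeriv i (fun u' => Jint g 0 j u' v) u = Jint g i j u v := by
  induction i with
  | zero => intro u v; simp
  | succ i ih =>
    intro u v
    rw [iteratedDeriv_succ]
    have : iteratedDeriv i (fun u' => Jint g 0 j u' v) = fun u' => Jint g i j u' v :=
      funext fun u' => ih u' v
    rw [this]
    exact (hasDerivAt_J_u g hg i j u v).deriv

/-- `((k+r-1)!/((k-1)!(r-1)!)) ∫₀¹ g^{(k+r-1)}(u+(v-u)t) t^{k-1}(1-t)^{r-1} dt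
= (k+r-1) · C(k+r-2, k-1) · _{r-1}M_{k-1}(u,v)`; i.e. the Beta(k,r) conditional
expectation of `g^{(k+r-1)}(R)/(k+r-1)` for `R = u + (v-u)B` equals
`C(k+r-2,k-1) · _{r-1}M_{k-1}(u,v)`. -/
theorem stmt16 (k r : ℕ) (hk : 1 ≤ k) (hr : 1 ≤ r) (u v : ℝ) (huv : u < v)
    (g : ℝ → ℝ) (hg : ContDiff ℝ (⊤ : ℕ∞) g) :
    (((k + r - 1).factorial : ℝ) / (((k - 1).factorial : ℝ) * ((r - 1).factorial : ℝ))) *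
        ∫ t in Set.Ioo (0 : ℝ) 1,
          iteratedDeriv (k + r - 1) g (u + (v - u) * t) * t ^ (k - 1) * (1 - t) ^ (r - 1) =
      ((k : ℝ) + r - 1) * ((k + r - 2).choose (k - 1) : ℝ) * Mmix g (r - 1) (k - 1) u v := by
  obtain ⟨k', rfl⟩ : ∃ k', k = k' + 1 := ⟨k - 1, by omega⟩
  obtain ⟨r', rfl⟩ : ∃ r', r = r' + 1 := ⟨r - 1, by omega⟩
  have hM : Mmix g r' k' u v = Jint g r' k' u v := by
    unfold Mmix
    have hev : (fun u' => iteratedDeriv k' (fun v' => (g v' - g u') / (v' - u')) v)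
        =ᶠ[𝓝 u] (fun u' => Jint g 0 k' u' v) := by
      have hopen : IsOpen {u' : ℝ | u' < v} := isOpen_lt continuous_id continuous_const
      filter_upwards [hopen.mem_nhds huv] with u' hu'
      exact lemA_s16 g hg k' u' v hu'
    rw [hev.iteratedDeriv_eq r']
    exact lemB g hg k' r' u v
  have hsub1 : k' + 1 + (r' + 1) - 1 = k' + r' + 1 := by omega
  have hsub2 : k' + 1 + (r' + 1) - 2 = k' + r' := by omega
  have hsub3 : k' + 1 - 1 = k' := by omega
  have hsub4 : r' + 1 - 1 = r' := by omega
  rw [hsub1, hsub2, hsub3, hsub4, hM]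
  have hInt : (∫ t in Set.Ioo (0 : ℝ) 1,
      iteratedDeriv (k' + r' + 1) g (u + (v - u) * t) * t ^ k' * (1 - t) ^ r')
      = Jint g r' k' u v := by
    unfold Jint
    have : r' + k' + 1 = k' + r' + 1 := by omega
    rw [this]
  rw [hInt]
  have hNat : (k' + r').choose k' * r'.factorial * k'.factorial = (k' + r').factorial := by
    have := Nat.add_choose_mul_factorial_mul_factorial r' k'
    rwa [Nat.add_comm r' k'] at this
  have hfac : ((k' + r' + 1).factorial : ℝ)
      = ((k' + r' + 1 : ℕ) : ℝ) * ((k' + r').choose k' : ℝ) * (r'.factorial : ℝ) * (k'.factorial : ℝ) := by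
    rw [Nat.factorial_succ]
    rw [← hNat]
    push_cast
    ring
  rw [hfac]
  have h1 : (k'.factorial : ℝ) ≠ 0 := Nat.cast_ne_zero.mpr (Nat.factorial_ne_zero _)
  have h2 : (r'.factorial : ℝ) ≠ 0 := Nat.cast_ne_zero.mpr (Nat.factorial_ne_zero _)
  field_simp
  push_cast
  ring
end

section
/- Let u < v and k, r positive integers, and let g be smooth on a neighborhood of [u, v] with M(u,v) = (g(v)-g(u))/(v-u). Then the case k = r of the weighted-average identity holds: for g(x) = x^{2k}/(2k)!, C(2k-2, k-1) · _{k-1}M_{k-1}(u,v) = (1/(2k-1)) · (u + v)/2, i.e., the regression identity E[R | endpoints] = (u+v)/2 specializes the formula (ru+kv)/(k+r) at r = k. -/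
open Filter Set Topology

/-!
Off the diagonal the divided difference of `x ^ n / n!` is the polynomial
`(∑ l < n, v ^ l u ^ (n - 1 - l)) / n!`, so `∂ᵤⁱ ∂ᵥʲ M` can be computed monomial by monomial.
For `n = i + j + 2` every monomial of the sum is killed by the derivatives except `v ^ j u ^ (i + 1)`
and `v ^ (j + 1) u ^ i`, leaving `(j! (i + 1)! u + (j + 1)! i! v) / n!`. With `i = j = k - 1`
the binomial `C(2k - 2, k - 1) = (2k - 2)! / ((k - 1)!)²` turns this into `(u + v) / (2 (2k - 1))`.
-/

open Finset

lemma Mmix_eq_of_divided_difference {g : ℝ → ℝ} {D : ℝ → ℝ → ℝ}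
    (hD : ∀ a b, a ≠ b → (g b - g a) / (b - a) = D a b) (i j : ℕ) {u v : ℝ} (huv : u ≠ v) :
    Mmix g i j u v = iteratedDeriv i (fun a => iteratedDeriv j (D a) v) u := by
  have inner : ∀ a, a ≠ v →
      iteratedDeriv j (fun b => (g b - g a) / (b - a)) v = iteratedDeriv j (D a) v := by
    intro a hav
    refine EventuallyEq.iteratedDeriv_eq j ?_
    filter_upwards [isOpen_ne.mem_nhds hav.symm] with b hab using hD a b (Ne.symm hab)
  refine EventuallyEq.iteratedDeriv_eq i ?_
  filter_upwards [isOpen_ne.mem_nhds huv] with a hav using inner a hav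

section MixedDerivative

variable {𝕜 : Type*} [NontriviallyNormedField 𝕜]

lemma iteratedDeriv_iteratedDeriv_geom_sum₂ (n i j : ℕ) (u v : 𝕜) :
    iteratedDeriv i (fun a => iteratedDeriv j (fun b => ∑ l ∈ range n, b ^ l * a ^ (n - 1 - l)) v) u
      = ∑ l ∈ range n, (l.descFactorial j * (n - 1 - l).descFactorial i : 𝕜) *
          v ^ (l - j) * u ^ (n - 1 - l - i) := by
  have inner : ∀ a : 𝕜, iteratedDeriv j (fun b => ∑ l ∈ range n, b ^ l * a ^ (n - 1 - l)) v
      = ∑ l ∈ range n, (l.descFactorial j * v ^ (l - j) : 𝕜) * a ^ (n - 1 - l) := fun a => by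
    rw [iteratedDeriv_fun_sum fun l _ => by fun_prop]
    simp only [iteratedDeriv_mul_const_field, iteratedDeriv_pow]
  simp only [inner]
  rw [iteratedDeriv_fun_sum fun l _ => by fun_prop]
  refine sum_congr rfl fun l _ => ?_
  rw [iteratedDeriv_const_mul_field, iteratedDeriv_pow]
  ring

lemma sum_descFactorial_mul_descFactorial (i j : ℕ) (u v : 𝕜) :
    ∑ l ∈ range (i + j + 2), (l.descFactorial j * (i + j + 2 - 1 - l).descFactorial i : 𝕜) *
        v ^ (l - j) * u ^ (i + j + 2 - 1 - l - i)
      = j.factorial * (i + 1).factorial * u + (j + 1).factorial * i.factorial * v := by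
  rw [sum_eq_add_of_mem j (j + 1) (Finset.mem_range.2 (by omega))
    (Finset.mem_range.2 (by omega)) (by omega)]
  · have h₁ : i + j + 2 - 1 - j = i + 1 := by omega
    have h₂ : i + j + 2 - 1 - (j + 1) = i := by omega
    have succ_descFactorial_self (n : ℕ) : (n + 1).descFactorial n = (n + 1).factorial := by
      simpa using Nat.factorial_mul_descFactorial n.le_succ
    simp only [h₁, h₂, Nat.descFactorial_self, succ_descFactorial_self, Nat.sub_self,
      Nat.add_sub_cancel_left, pow_zero, pow_one]
    ring
  · intro l hl hlj
    rw [Finset.mem_range] at hl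
    rcases lt_or_gt_of_ne hlj.1 with h | h
    · simp [Nat.descFactorial_eq_zero_iff_lt.mpr h]
    · have : i + j + 2 - 1 - l < i := by omega
      rw [Nat.descFactorial_eq_zero_iff_lt.mpr this]
      simp

end MixedDerivative

lemma choose_mul_factorial_mul_factorial_succ (m : ℕ) :
    (2 * m).choose m * m.factorial * (m + 1).factorial * (2 * (2 * m + 1))
      = (2 * m + 2).factorial := by
  have h := Nat.choose_mul_factorial_mul_factorial (show m ≤ 2 * m by omega)
  rw [show 2 * m - m = m by omega] at h
  rw [Nat.factorial_succ (2 * m + 1), Nat.factorial_succ (2 * m), ← h, Nat.factorial_succ m]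
  ring

/-- for `g(x) = x^{2k}/(2k)!`, the `k = r` case of the weighted-average
identity: `C(2k-2, k-1) · _{k-1}M_{k-1}(u,v) = (1/(2k-1)) · (u+v)/2`. -/
theorem stmt17 (k : ℕ) (hk : 1 ≤ k) (u v : ℝ) (huv : u < v) :
    ((2 * k - 2).choose (k - 1) : ℝ) *
        Mmix (fun x => x ^ (2 * k) / ((2 * k).factorial : ℝ)) (k - 1) (k - 1) u v =
      (1 / (2 * (k : ℝ) - 1)) * ((u + v) / 2) := by
  obtain ⟨m, rfl⟩ : ∃ m, k = m + 1 := ⟨k - 1, by omega⟩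
  have hn : 2 * (m + 1) = m + m + 2 := by omega
  have hD : ∀ a b : ℝ, a ≠ b →
      (b ^ (2 * (m + 1)) / ((2 * (m + 1)).factorial : ℝ)
        - a ^ (2 * (m + 1)) / ((2 * (m + 1)).factorial : ℝ)) / (b - a)
      = (∑ l ∈ range (m + m + 2), b ^ l * a ^ (m + m + 2 - 1 - l))
          / ((m + m + 2).factorial : ℝ) := fun a b hab => by
    rw [Commute.geom_sum₂ (Commute.all b a) hab.symm, hn]
    ring
  rw [Mmix_eq_of_divided_difference hD _ _ huv.ne]
  simp only [Nat.add_sub_cancel, iteratedDeriv_div_const, show 2 * (m + 1) - 2 = 2 * m by omega]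
  rw [iteratedDeriv_iteratedDeriv_geom_sum₂, sum_descFactorial_mul_descFactorial]
  rw [show m + m + 2 = 2 * m + 2 by omega, ← choose_mul_factorial_mul_factorial_succ m]
  have hchoose : ((2 * m).choose m : ℝ) ≠ 0 := mod_cast (Nat.choose_pos (by omega)).ne'
  push_cast
  rw [show 2 * ((m : ℝ) + 1) - 1 = 2 * m + 1 by ring]
  field_simp
end
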